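/- arXiv:2211.13831 — 9 statements merged into one kernel-verified Lean document; each statement's English description precedes it below -/
import Mathlib

section
/- Let θ > 0 and set q(l) = θ/(θ+l−1) for l ≥ 3, q(1) = 1, q(2) = 0. (i) For all integers 3 ≤ i < n, Σ_{j=0}^{n−i−1} (−1)^j Π_{l=i}^{j+i} q(l) = Σ_{j=1}^{n−i} (−1)^{j+1} θ^j/(θ+i−1)_{(j)} (this is the probability P(η_i = 1) for the playground-game chain of size n). (ii) For every i ≥ 3, the series Σ_{j=1}^{∞} (−1)^{j+1} θ^j/(θ+i−1)_{(j)} converges and equals (θ/(θ+i−1))·M(1, θ+i, −θ) = θ·∫_0^1 e^{−θu}(1−u)^{θ+i−2} du, where M(a,b,z) = Σ_{j≥0} a_{(j)} z^j/(b_{(j)} j!) is the confluent hypergeometric function. -/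
/-!
With `s = θ + i - 1`, the product `q i ⋯ q (i + j)` telescopes to `θ ^ (j+1) / (s)_{(j+1)}`, so
both sides of (i) are the partial sum `θ ∑_{k<N} (-θ)^k / (s)_{(k+1)}`. For (ii), the beta
integral `∫₀¹ t^k (1-t)^(s-1) dt = k! / (s)_{(k+1)}` turns the term `(-θ)^k / (s)_{(k+1)}` into
the integral of the `k`-th term of the exponential series of `e^{-θt}` against `(1-t)^(s-1)`;
dominated convergence (by `θ^k / k!`) sums the series to `∫₀¹ e^{-θt} (1-t)^(s-1) dt`, while
`(s)_{(k+1)} = s (s+1)_{(k)}` and `(1)_{(k)} = k!` identify it with `s⁻¹ M(1, s+1, -θ)`.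
-/

open Finset Filter

/-- Rising factorial `(x)_{(j)} = x (x+1) ⋯ (x+j-1)`. -/
noncomputable def risingFac (x : ℝ) (j : ℕ) : ℝ := ∏ k ∈ Finset.range j, (x + k)

/-- The confluent hypergeometric function `M(a,b,z) = ∑_{j≥0} a_{(j)} z^j / (b_{(j)} j!)`. -/
noncomputable def chgM (a b z : ℝ) : ℝ :=
  ∑' j : ℕ, risingFac a j * z ^ j / (risingFac b j * (j.factorial : ℝ))

lemma risingFac_succ (x : ℝ) (j : ℕ) : risingFac x (j + 1) = x * risingFac (x + 1) j := by
  rw [risingFac, risingFac, prod_range_succ', mul_comm]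
  push_cast
  simp only [add_zero, add_assoc, add_comm (1 : ℝ)]

lemma risingFac_one (j : ℕ) : risingFac 1 j = j.factorial := by
  rw [risingFac, ← prod_range_add_one_eq_factorial]
  push_cast
  simp only [add_comm]

lemma prod_Icc_div_add_sub_one (θ : ℝ) (i j : ℕ) :
    ∏ l ∈ Icc i (j + i), θ / (θ + l - 1) = θ ^ (j + 1) / risingFac (θ + i - 1) (j + 1) := by
  rw [← Ico_add_one_right_eq_Icc, prod_Ico_eq_prod_range, show j + i + 1 - i = j + 1 by omega,
    prod_div_distrib, prod_const, card_range, risingFac]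
  congr 1
  exact prod_congr rfl fun k _ => by push_cast; ring

lemma sum_Icc_neg_one_pow_mul_div_risingFac (θ s : ℝ) (N : ℕ) :
    ∑ j ∈ Icc 1 N, (-1 : ℝ) ^ (j + 1) * θ ^ j / risingFac s j
      = θ * ∑ k ∈ range N, (-θ) ^ k / risingFac s (k + 1) := by
  rw [← Ico_add_one_right_eq_Icc, sum_Ico_eq_sum_range, Nat.add_sub_cancel, mul_sum]
  refine sum_congr rfl fun k _ => ?_
  rw [add_comm 1 k, neg_pow θ, pow_succ θ]
  ring

lemma integral_pow_mul_one_sub_rpow {s : ℝ} (hs : 0 < s) (j : ℕ) :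
    ∫ t in (0:ℝ)..1, t ^ j * (1 - t) ^ (s - 1) = j.factorial / risingFac s (j + 1) := by
  have hcomplex : ((∫ t in (0:ℝ)..1, t ^ j * (1 - t) ^ (s - 1) : ℝ) : ℂ)
      = Complex.betaIntegral ((j : ℂ) + 1) s := by
    rw [← intervalIntegral.integral_ofReal, Complex.betaIntegral]
    refine intervalIntegral.integral_congr fun t ht => ?_
    rw [Set.uIcc_of_le zero_le_one] at ht
    rw [add_sub_cancel_right, Complex.cpow_natCast, Complex.ofReal_mul, Complex.ofReal_pow,
      Complex.ofReal_cpow (by linarith [ht.2])]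
    push_cast
    rfl
  have hbeta : Complex.betaIntegral ((j : ℂ) + 1) s
      = j.factorial / ∏ k ∈ range (j + 1), ((s : ℂ) + k) := by
    rw [Complex.betaIntegral_symm]
    exact Complex.betaIntegral_eval_nat_add_one_right (by simpa using hs) j
  rw [risingFac]
  exact_mod_cast hcomplex.trans hbeta

lemma hasSum_pow_div_risingFac_succ (z : ℝ) {s : ℝ} (hs : 1 ≤ s) :
    HasSum (fun k : ℕ => z ^ k / risingFac s (k + 1))
      (∫ t in (0:ℝ)..1, Real.exp (z * t) * (1 - t) ^ (s - 1)) := by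
  have hexp : 0 ≤ s - 1 := by linarith
  have hterm : ∀ k : ℕ, ∫ t in (0:ℝ)..1, z ^ k / k.factorial * (t ^ k * (1 - t) ^ (s - 1))
      = z ^ k / risingFac s (k + 1) := fun k => by
    have := k.factorial_pos
    rw [intervalIntegral.integral_const_mul, integral_pow_mul_one_sub_rpow (by linarith)]
    field_simp
  suffices HasSum (fun k : ℕ => ∫ t in (0:ℝ)..1, z ^ k / k.factorial * (t ^ k * (1 - t) ^ (s - 1)))
      (∫ t in (0:ℝ)..1, Real.exp (z * t) * (1 - t) ^ (s - 1)) by simpa only [hterm] using this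
  refine intervalIntegral.hasSum_integral_of_dominated_convergence
    (bound := fun k _ => |z| ^ k / k.factorial) (fun k => ?_) (fun k => ?_) ?_
    intervalIntegrable_const ?_
  · exact (continuous_const.mul ((continuous_pow k).mul
      ((continuous_const.sub continuous_id).rpow_const fun _ => Or.inr hexp))).aestronglyMeasurable
  · filter_upwards with t ht
    rw [Set.uIoc_of_le zero_le_one] at ht
    have hpow : t ^ k ≤ 1 := pow_le_one₀ ht.1.le ht.2
    have hrpow : (1 - t) ^ (s - 1) ≤ 1 :=
      Real.rpow_le_one (by linarith [ht.2]) (by linarith [ht.1]) hexp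
    have hrpow_nonneg : 0 ≤ (1 - t) ^ (s - 1) := Real.rpow_nonneg (by linarith [ht.2]) _
    rw [norm_mul, norm_div, norm_pow, Real.norm_eq_abs, Real.norm_natCast,
      Real.norm_of_nonneg (mul_nonneg (pow_nonneg ht.1.le k) hrpow_nonneg)]
    calc |z| ^ k / k.factorial * (t ^ k * (1 - t) ^ (s - 1))
        ≤ |z| ^ k / k.factorial * (1 * 1) := by gcongr
      _ = |z| ^ k / k.factorial := by ring
  · exact .of_forall fun _ _ => Real.summable_pow_div_factorial |z|
  · filter_upwards with t _
    have hexp_series : HasSum (fun k : ℕ => (z * t) ^ k / k.factorial) (Real.exp (z * t)) := by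
      rw [Real.exp_eq_exp_ℝ]
      exact NormedSpace.expSeries_div_hasSum_exp _
    refine (hexp_series.mul_right ((1 - t) ^ (s - 1))).congr_fun fun k => ?_
    ring

lemma chgM_one_left (b z : ℝ) : chgM 1 b z = ∑' k : ℕ, z ^ k / risingFac b k := by
  refine tsum_congr fun k => ?_
  have := k.factorial_pos
  rw [risingFac_one, mul_comm (risingFac b k), ← div_div, mul_div_cancel_left₀ _ (by positivity)]

lemma tsum_pow_div_risingFac_succ (z s : ℝ) :
    ∑' k : ℕ, z ^ k / risingFac s (k + 1) = s⁻¹ * chgM 1 (s + 1) z := by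
  rw [chgM_one_left, ← tsum_mul_left]
  refine tsum_congr fun k => ?_
  rw [risingFac_succ, div_mul_eq_div_div, div_eq_inv_mul _ s, mul_div_assoc]

theorem stmt1_general (θ : ℝ) (hθ : 0 < θ) (q : ℕ → ℝ)
    (hq : ∀ l, 3 ≤ l → q l = θ / (θ + l - 1)) :
    (∀ i n : ℕ, 3 ≤ i → i < n →
      ∑ j ∈ Finset.range (n - i), (-1 : ℝ) ^ j * ∏ l ∈ Finset.Icc i (j + i), q l
        = ∑ j ∈ Finset.Icc 1 (n - i),
            (-1 : ℝ) ^ (j + 1) * θ ^ j / risingFac (θ + i - 1) j) ∧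
    (∀ i : ℕ, 3 ≤ i →
      Tendsto (fun N : ℕ => ∑ j ∈ Finset.Icc 1 N,
          (-1 : ℝ) ^ (j + 1) * θ ^ j / risingFac (θ + i - 1) j) atTop
        (nhds (θ / (θ + i - 1) * chgM 1 (θ + i) (-θ))) ∧
      θ / (θ + i - 1) * chgM 1 (θ + i) (-θ)
        = θ * ∫ u in (0:ℝ)..1, Real.exp (-θ * u) * (1 - u) ^ (θ + i - 2)) := by
  refine ⟨fun i n hi _ => ?_, fun i hi => ?_⟩
  · have hprod : ∀ j, ∏ l ∈ Icc i (j + i), q l = θ ^ (j + 1) / risingFac (θ + i - 1) (j + 1) :=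
      fun j => by
        rw [prod_congr rfl fun l hl => hq l (hi.trans (mem_Icc.mp hl).1), prod_Icc_div_add_sub_one]
    rw [sum_Icc_neg_one_pow_mul_div_risingFac, mul_sum]
    refine sum_congr rfl fun j _ => ?_
    rw [hprod, neg_pow, pow_succ θ]
    ring
  · have hs : 1 ≤ θ + i - 1 := by
      have : (3 : ℝ) ≤ i := by exact_mod_cast hi
      linarith
    have hsum := hasSum_pow_div_risingFac_succ (-θ) hs
    rw [show θ + i - 1 - 1 = θ + i - 2 by ring] at hsum
    have hval : θ / (θ + i - 1) * chgM 1 (θ + i) (-θ)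
        = θ * ∫ u in (0:ℝ)..1, Real.exp (-θ * u) * (1 - u) ^ (θ + i - 2) := by
      rw [← hsum.tsum_eq, tsum_pow_div_risingFac_succ, sub_add_cancel]
      ring
    refine ⟨?_, hval⟩
    simp only [sum_Icc_neg_one_pow_mul_div_risingFac]
    exact hval ▸ hsum.tendsto_sum_nat.const_mul θ

/-- marginal probabilities of the playground-game chain and their limit. -/
theorem stmt1 (θ : ℝ) (hθ : 0 < θ) (q : ℕ → ℝ)
    (hq1 : q 1 = 1) (hq2 : q 2 = 0)
    (hq : ∀ l, 3 ≤ l → q l = θ / (θ + l - 1)) :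
    (∀ i n : ℕ, 3 ≤ i → i < n →
      ∑ j ∈ Finset.range (n - i), (-1 : ℝ) ^ j * ∏ l ∈ Finset.Icc i (j + i), q l
        = ∑ j ∈ Finset.Icc 1 (n - i),
            (-1 : ℝ) ^ (j + 1) * θ ^ j / risingFac (θ + i - 1) j) ∧
    (∀ i : ℕ, 3 ≤ i →
      Tendsto (fun N : ℕ => ∑ j ∈ Finset.Icc 1 N,
          (-1 : ℝ) ^ (j + 1) * θ ^ j / risingFac (θ + i - 1) j) atTop
        (nhds (θ / (θ + i - 1) * chgM 1 (θ + i) (-θ))) ∧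
      θ / (θ + i - 1) * chgM 1 (θ + i) (-θ)
        = θ * ∫ u in (0:ℝ)..1, Real.exp (-θ * u) * (1 - u) ^ (θ + i - 2)) :=
  stmt1_general θ hθ q hq
end

section
/- Let p : ℕ → ℝ satisfy p(1) = 0, p(2) = 1 and 0 < p(i) < 1 for all i ≥ 3, and set q(i) := 1 − p(i). Define EK(n) := Σ_{i=1}^{n−1} Σ_{j=0}^{n−i−1} (−1)^j Π_{l=i}^{j+i} q(l) (the expected number of cycles of the random-derangement chain X^{n,p}). Suppose there exists α ≥ 0 such that n·q(n) → α as n → ∞ and the series ψ := Σ_{i=1}^{∞} (q(i) − α/i) converges. Then: (a) for every j ≥ 1 the series ā_j := Σ_{i=1}^{∞} Π_{l=i}^{j+i} q(l) converges; (b) the alternating series Σ_{j=1}^{∞} (−1)^j ā_j converges; (c) lim_{n→∞} ( EK(n) − α·log n ) = α·γ + ψ + Σ_{j=1}^{∞} (−1)^j ā_j, where γ is the Euler–Mascheroni constant. -/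
/-!
Write `windowProd q i j = q (i + 1) ⋯ q (i + j + 1)`. Exchanging the two sums defining `EK n`
and splitting off the terms `j = 0` gives `EK n = ∑_{1 ≤ i < n} q i - ∑_k (-1)^k c_n(k)`, where
the truncated sums `c_n(k) = ∑_{i < n - 2 - k} windowProd q i (k + 1)` converge to `ā_{k+1}` as
`n → ∞`. The first sum is `α log n + α γ + ψ + o(1)` by the hypothesis on `ψ` and
`H_n - log n → γ`. Since `q ≤ 1`, each `c_n` is antitone in `k`, so every partial sum of
`∑_k (-1)^k c_n(k)` lies within `c_n(J)` of the whole sum; this tail bound, uniform in `n`, lets the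
limit `n → ∞` pass through the alternating sum. Finally `q l = O(1/l)` gives
`windowProd q i j ≤ (C / (i + 1))^2` for `j ≥ 1`, which yields (a) and, by dominated convergence,
`ā_j → 0`, hence (b).
-/

open Finset Filter Topology

theorem Finset.sum_Icc_one_eq_sum_range {M : Type*} [AddCommMonoid M] (f : ℕ → M) (n : ℕ) :
    ∑ i ∈ Icc 1 n, f i = ∑ i ∈ range n, f (i + 1) := by
  rw [← Ico_add_one_right_eq_Icc, sum_Ico_eq_sum_range]
  simp [add_comm]

theorem Antitone.abs_tendsto_sub_alternating_series_le {f : ℕ → ℝ} {l : ℝ}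
    (hfl : Tendsto (fun n ↦ ∑ i ∈ range n, (-1) ^ i * f i) atTop (𝓝 l)) (hfa : Antitone f)
    (n : ℕ) : |l - ∑ i ∈ range n, (-1) ^ i * f i| ≤ f n := by
  obtain ⟨k, rfl | rfl⟩ := Nat.even_or_odd' n
  · have hlow := hfa.alternating_series_le_tendsto hfl k
    have hupp := hfa.tendsto_le_alternating_series hfl k
    rw [sum_range_succ, (even_two_mul k).neg_one_pow, one_mul] at hupp
    exact abs_le.mpr ⟨by linarith, by linarith⟩
  · have hlow := hfa.alternating_series_le_tendsto hfl (k + 1)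
    have hupp := hfa.tendsto_le_alternating_series hfl k
    rw [mul_add_one, sum_range_succ, (odd_two_mul_add_one k).neg_one_pow, neg_one_mul] at hlow
    exact abs_le.mpr ⟨by linarith, by linarith⟩

theorem exists_tendsto_alternating_series_of_tendsto {c : ℕ → ℕ → ℝ} {t l : ℕ → ℝ}
    (hc : ∀ n, Antitone (c n))
    (hl : ∀ n, Tendsto (fun M ↦ ∑ k ∈ range M, (-1) ^ k * c n k) atTop (𝓝 (l n)))
    (hct : ∀ k, Tendsto (fun n ↦ c n k) atTop (𝓝 (t k))) (ht : Tendsto t atTop (𝓝 0)) :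
    ∃ S, Tendsto (fun M ↦ ∑ k ∈ range M, (-1) ^ k * t k) atTop (𝓝 S) ∧
      Tendsto l atTop (𝓝 S) := by
  have ht_anti : Antitone t := antitone_nat_of_succ_le fun k ↦
    le_of_tendsto_of_tendsto' (hct (k + 1)) (hct k) fun n ↦ hc n k.le_succ
  obtain ⟨S, hS⟩ := ht_anti.tendsto_alternating_series_of_tendsto_zero ht
  refine ⟨S, hS, Metric.tendsto_nhds.mpr fun ε hε ↦ ?_⟩
  obtain ⟨J, htJ⟩ := (ht.eventually (gt_mem_nhds (by positivity : 0 < ε / 4))).exists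
  set P : (ℕ → ℝ) → ℝ := fun f ↦ ∑ k ∈ range J, (-1) ^ k * f k
  have hP : Tendsto (fun n ↦ P (c n)) atTop (𝓝 (P t)) :=
    tendsto_finsetSum _ fun k _ ↦ (hct k).const_mul _
  filter_upwards [(hct J).eventually (gt_mem_nhds htJ),
    Metric.tendsto_nhds.mp hP (ε / 4) (by positivity)] with n hcJ hPn
  have hln := (hc n).abs_tendsto_sub_alternating_series_le (hl n) J
  have hSJ := ht_anti.abs_tendsto_sub_alternating_series_le hS J
  rw [Real.dist_eq] at hPn ⊢
  calc |l n - S| = |(l n - P (c n)) + (P (c n) - P t) - (S - P t)| := by congr 1; ring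
    _ ≤ |l n - P (c n)| + |P (c n) - P t| + |S - P t| :=
      (abs_sub _ _).trans (by gcongr; exact abs_add_le _ _)
    _ < ε := by linarith

theorem tendsto_sum_sub_mul_log_add_one {q : ℕ → ℝ} {α ψ : ℝ}
    (hψ : Tendsto (fun N : ℕ ↦ ∑ i ∈ Icc 1 N, (q i - α / i)) atTop (𝓝 ψ)) :
    Tendsto (fun N : ℕ ↦ ∑ i ∈ Icc 1 N, q i - α * Real.log (N + 1)) atTop
      (𝓝 (ψ + α * Real.eulerMascheroniConstant)) := by
  refine (hψ.add (Real.tendsto_harmonic_sub_log_add_one.const_mul α)).congr fun N ↦ ?_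
  simp only [harmonic_eq_sum_Icc, sum_sub_distrib, div_eq_mul_inv, mul_sub]
  push_cast
  rw [mul_sum]
  ring

theorem exists_le_div_of_tendsto_mul {q : ℕ → ℝ} {α : ℝ}
    (h : Tendsto (fun n : ℕ ↦ (n : ℝ) * q n) atTop (𝓝 α)) : ∃ C, ∀ l, 1 ≤ l → q l ≤ C / l := by
  obtain ⟨C, hC⟩ := h.bddAbove_range
  exact ⟨C, fun l hl ↦ by
    rw [le_div_iff₀ (by positivity), mul_comm]
    exact hC ⟨l, rfl⟩⟩

def windowProd (q : ℕ → ℝ) (i j : ℕ) : ℝ := ∏ l ∈ Icc (i + 1) (j + (i + 1)), q l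

section WindowProd

variable {q : ℕ → ℝ} {C : ℝ}

theorem windowProd_nonneg (hq : ∀ l, 1 ≤ l → 0 ≤ q l) (i j : ℕ) : 0 ≤ windowProd q i j :=
  prod_nonneg fun l hl ↦ hq l (by grind)

theorem windowProd_le_prod_of_subset (hq : ∀ l, 1 ≤ l → 0 ≤ q l ∧ q l ≤ 1) {i j : ℕ}
    {s : Finset ℕ} (hs : s ⊆ Icc (i + 1) (j + (i + 1))) : windowProd q i j ≤ ∏ l ∈ s, q l :=
  prod_le_prod_of_subset_of_le_one hs (fun l hl ↦ (hq l (by grind)).1)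
    fun l hl _ ↦ (hq l (by grind)).2

theorem windowProd_succ_le (hq : ∀ l, 1 ≤ l → 0 ≤ q l ∧ q l ≤ 1) (i j : ℕ) :
    windowProd q i (j + 1) ≤ windowProd q i j :=
  windowProd_le_prod_of_subset hq (Icc_subset_Icc_right (by omega))

theorem windowProd_le_last (hq : ∀ l, 1 ≤ l → 0 ≤ q l ∧ q l ≤ 1) (i j : ℕ) :
    windowProd q i j ≤ q (j + (i + 1)) := by
  simpa using windowProd_le_prod_of_subset hq (i := i) (j := j) (s := {j + (i + 1)})
    (by simp)

theorem windowProd_le_sq (hq : ∀ l, 1 ≤ l → 0 ≤ q l ∧ q l ≤ 1)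
    (hC : ∀ l, 1 ≤ l → q l ≤ C / l) (i : ℕ) {j : ℕ} (hj : 1 ≤ j) :
    windowProd q i j ≤ (C / (i + 1)) ^ 2 := by
  have hpair : windowProd q i j ≤ q (i + 1) * q (i + 2) := by
    rw [← prod_pair (by omega : i + 1 ≠ i + 2)]
    refine windowProd_le_prod_of_subset hq fun l hl ↦ ?_
    simp only [mem_insert, mem_singleton, mem_Icc] at hl ⊢
    omega
  have h1 : q (i + 1) ≤ C / (i + 1) := by exact_mod_cast hC (i + 1) (by omega)
  have hC0 : 0 ≤ C := by
    have := (hq (i + 1) (by omega)).1.trans h1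
    rwa [le_div_iff₀ (by positivity), zero_mul] at this
  have h2 : q (i + 2) ≤ C / (i + 1) :=
    calc q (i + 2) ≤ C / (i + 2) := by exact_mod_cast hC (i + 2) (by omega)
      _ ≤ C / (i + 1) := by gcongr; norm_num
  calc windowProd q i j ≤ q (i + 1) * q (i + 2) := hpair
    _ ≤ (C / (i + 1)) ^ 2 := by
      rw [sq]; exact mul_le_mul h1 h2 (hq _ (by omega)).1 ((hq _ (by omega)).1.trans h1)

theorem summable_div_add_one_sq (C : ℝ) : Summable fun i : ℕ ↦ (C / (i + 1)) ^ 2 := by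
  have hsq := (summable_nat_add_iff 1).mpr (Real.summable_one_div_nat_pow.mpr one_lt_two)
  refine (hsq.mul_left (C ^ 2)).congr fun i ↦ ?_
  push_cast
  rw [div_pow, mul_one_div]

theorem summable_windowProd (hq : ∀ l, 1 ≤ l → 0 ≤ q l ∧ q l ≤ 1)
    (hC : ∀ l, 1 ≤ l → q l ≤ C / l) {j : ℕ} (hj : 1 ≤ j) :
    Summable fun i ↦ windowProd q i j :=
  (summable_div_add_one_sq C).of_nonneg_of_le
    (fun i ↦ windowProd_nonneg (fun l hl ↦ (hq l hl).1) i j) fun i ↦ windowProd_le_sq hq hC i hj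

theorem tendsto_tsum_windowProd_zero (hq : ∀ l, 1 ≤ l → 0 ≤ q l ∧ q l ≤ 1)
    (hC : ∀ l, 1 ≤ l → q l ≤ C / l) :
    Tendsto (fun k ↦ ∑' i, windowProd q i (k + 1)) atTop (𝓝 0) := by
  have hlim : ∀ i, Tendsto (fun k ↦ windowProd q i (k + 1)) atTop (𝓝 0) := fun i ↦ by
    have hCl : Tendsto (fun k : ℕ ↦ C / ((k + 1 + (i + 1) : ℕ) : ℝ)) atTop (𝓝 0) :=
      (tendsto_const_div_atTop_nhds_zero_nat C).comp
        (tendsto_atTop_mono (fun k ↦ Nat.le_add_right_of_le k.le_succ) tendsto_id)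
    refine squeeze_zero (fun k ↦ windowProd_nonneg (fun l hl ↦ (hq l hl).1) i (k + 1))
      (fun k ↦ ?_) hCl
    exact (windowProd_le_last hq i (k + 1)).trans (hC _ (by omega))
  simpa using tendsto_tsum_of_dominated_convergence (summable_div_add_one_sq C) hlim
    (Eventually.of_forall fun k i ↦ by
      rw [Real.norm_of_nonneg (windowProd_nonneg (fun l hl ↦ (hq l hl).1) i (k + 1))]
      exact windowProd_le_sq hq hC i (Nat.le_add_left 1 k))

end WindowProd

def truncWindowSum (q : ℕ → ℝ) (N k : ℕ) : ℝ := ∑ i ∈ range (N - k), windowProd q i (k + 1)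

def expectedCycles (q : ℕ → ℝ) (n : ℕ) : ℝ :=
  ∑ i ∈ Icc 1 (n - 1), ∑ j ∈ range (n - i), (-1) ^ j * ∏ l ∈ Icc i (j + i), q l

section TruncWindowSum

variable {q : ℕ → ℝ}

theorem truncWindowSum_antitone (hq : ∀ l, 1 ≤ l → 0 ≤ q l ∧ q l ≤ 1) (N : ℕ) :
    Antitone (truncWindowSum q N) := antitone_nat_of_succ_le fun k ↦
  calc truncWindowSum q N (k + 1)
      ≤ ∑ i ∈ range (N - (k + 1)), windowProd q i (k + 1) :=
        sum_le_sum fun i _ ↦ windowProd_succ_le hq i (k + 1)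
    _ ≤ truncWindowSum q N k :=
        sum_le_sum_of_subset_of_nonneg (range_subset_range.mpr (by omega))
          fun i _ _ ↦ windowProd_nonneg (fun l hl ↦ (hq l hl).1) i (k + 1)

theorem hasSum_alternating_truncWindowSum (N : ℕ) :
    HasSum (fun k ↦ (-1) ^ k * truncWindowSum q N k)
      (∑ k ∈ range N, (-1) ^ k * truncWindowSum q N k) :=
  hasSum_sum_of_ne_finset_zero fun k hk ↦ by
    simp [truncWindowSum, Nat.sub_eq_zero_of_le (not_lt.mp (mem_range.not.mp hk))]

theorem tendsto_truncWindowSum {k : ℕ} (hs : Summable fun i ↦ windowProd q i (k + 1)) :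
    Tendsto (truncWindowSum q · k) atTop (𝓝 (∑' i, windowProd q i (k + 1))) :=
  hs.hasSum.tendsto_sum_nat.comp (tendsto_sub_atTop_nat k)

theorem expectedCycles_add_two (N : ℕ) :
    expectedCycles q (N + 2) =
      ∑ i ∈ Icc 1 (N + 1), q i - ∑ k ∈ range N, (-1) ^ k * truncWindowSum q N k := by
  rw [expectedCycles, sum_comm' (t' := range (N + 1)) (s' := fun j ↦ Icc 1 (N + 1 - j))
    (fun i j ↦ by simp only [mem_Icc, mem_range]; omega), sum_range_succ', sub_eq_neg_add,
    ← sum_neg_distrib]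
  congr 1
  · refine sum_congr rfl fun k _ ↦ ?_
    rw [← mul_sum, truncWindowSum, sum_Icc_one_eq_sum_range, Nat.add_sub_add_right, pow_succ]
    simp only [windowProd]
    ring
  · simp

end TruncWindowSum

theorem stmt2_general (p q : ℕ → ℝ)
    (hp1 : p 1 = 0) (hp2 : p 2 = 1) (hp : ∀ i, 3 ≤ i → 0 < p i ∧ p i < 1)
    (hq : ∀ i, q i = 1 - p i)
    (EK : ℕ → ℝ)
    (hEK : ∀ n, EK n = ∑ i ∈ Finset.Icc 1 (n - 1), ∑ j ∈ Finset.range (n - i),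
        (-1 : ℝ) ^ j * ∏ l ∈ Finset.Icc i (j + i), q l)
    (α : ℝ)
    (hlim : Tendsto (fun n : ℕ => (n : ℝ) * q n) atTop (nhds α))
    (ψ : ℝ)
    (hψ : Tendsto (fun N : ℕ => ∑ i ∈ Finset.Icc 1 N, (q i - α / i)) atTop (nhds ψ)) :
    (∀ j : ℕ, 1 ≤ j →
      Summable (fun i : ℕ => ∏ l ∈ Finset.Icc (i + 1) (j + (i + 1)), q l)) ∧
    ∃ S : ℝ,
      Tendsto (fun M : ℕ => ∑ j ∈ Finset.Icc 1 M,
          (-1 : ℝ) ^ j * ∑' i : ℕ, ∏ l ∈ Finset.Icc (i + 1) (j + (i + 1)), q l) atTop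
        (nhds S) ∧
      Tendsto (fun n : ℕ => EK n - α * Real.log n) atTop
        (nhds (α * Real.eulerMascheroniConstant + ψ + S)) := by
  obtain rfl : EK = expectedCycles q := funext hEK
  have hq01 : ∀ l, 1 ≤ l → 0 ≤ q l ∧ q l ≤ 1 := by
    intro l hl
    rw [hq]
    obtain rfl | rfl | h3 : l = 1 ∨ l = 2 ∨ 3 ≤ l := by omega
    · simp [hp1]
    · simp [hp2]
    · constructor <;> linarith [hp l h3]
  obtain ⟨C, hC⟩ := exists_le_div_of_tendsto_mul hlim
  have hsumm : ∀ j, 1 ≤ j → Summable fun i ↦ windowProd q i j :=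
    fun j hj ↦ summable_windowProd hq01 hC hj
  obtain ⟨S, hS, hEKS⟩ := exists_tendsto_alternating_series_of_tendsto
    (truncWindowSum_antitone hq01) (fun N ↦ (hasSum_alternating_truncWindowSum N).tendsto_sum_nat)
    (fun k ↦ tendsto_truncWindowSum (hsumm (k + 1) k.succ_pos))
    (tendsto_tsum_windowProd_zero hq01 hC)
  refine ⟨hsumm, -S, hS.neg.congr fun M ↦ ?_, ?_⟩
  · rw [sum_Icc_one_eq_sum_range, ← sum_neg_distrib]
    refine sum_congr rfl fun k _ ↦ ?_
    rw [pow_succ]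
    simp only [windowProd]
    ring
  · rw [← tendsto_add_atTop_iff_nat 2]
    have hlog := (tendsto_sum_sub_mul_log_add_one hψ).comp (tendsto_add_atTop_nat 1)
    convert hlog.sub hEKS using 2
    · rw [expectedCycles_add_two, Function.comp_apply]
      push_cast
      rw [add_assoc, one_add_one_eq_two]
      ring
    · ring

/-- asymptotics of the expected number of cycles of the
random-derangement chain `X^{n,p}`. -/
theorem stmt2 (p q : ℕ → ℝ)
    (hp1 : p 1 = 0) (hp2 : p 2 = 1) (hp : ∀ i, 3 ≤ i → 0 < p i ∧ p i < 1)
    (hq : ∀ i, q i = 1 - p i)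
    (EK : ℕ → ℝ)
    (hEK : ∀ n, EK n = ∑ i ∈ Finset.Icc 1 (n - 1), ∑ j ∈ Finset.range (n - i),
        (-1 : ℝ) ^ j * ∏ l ∈ Finset.Icc i (j + i), q l)
    (α : ℝ) (hα : 0 ≤ α)
    (hlim : Tendsto (fun n : ℕ => (n : ℝ) * q n) atTop (nhds α))
    (ψ : ℝ)
    (hψ : Tendsto (fun N : ℕ => ∑ i ∈ Finset.Icc 1 N, (q i - α / i)) atTop (nhds ψ)) :
    (∀ j : ℕ, 1 ≤ j →
      Summable (fun i : ℕ => ∏ l ∈ Finset.Icc (i + 1) (j + (i + 1)), q l)) ∧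
    ∃ S : ℝ,
      Tendsto (fun M : ℕ => ∑ j ∈ Finset.Icc 1 M,
          (-1 : ℝ) ^ j * ∑' i : ℕ, ∏ l ∈ Finset.Icc (i + 1) (j + (i + 1)), q l) atTop
        (nhds S) ∧
      Tendsto (fun n : ℕ => EK n - α * Real.log n) atTop
        (nhds (α * Real.eulerMascheroniConstant + ψ + S)) :=
  stmt2_general p q hp1 hp2 hp hq EK hEK α hlim ψ hψ
end

section
/- Let p : ℕ → ℝ satisfy p(1) = 0, p(2) = 1, 0 < p(i) < 1 for i ≥ 3, and q(i) := 1 − p(i). For j > 1 define EC_j(n) := q(n−j+1)·Π_{l=n−j+2}^{n−1} p(l) + Σ_{i=j+1}^{n−1} Σ_{k=0}^{n−i−1} (−1)^k · q(i−j) · Π_{l=i−j+1}^{i−2} p(l) · Π_{l=i}^{k+i} q(l) (the expected number of j-cycles of X^{n,p}). Suppose there exists α ≥ 0 with n·q(n) → α as n → ∞. Then for every j > 1: (a) for each k ≥ 0 the limit b̄_k(j) := lim_{n→∞} Σ_{i=j+1}^{n−k−1} q(i−j) Π_{l=i−j+1}^{i−2} p(l) Π_{l=i}^{k+i} q(l)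 exists and is finite; (b) lim_{n→∞} EC_j(n) exists, and for every m ≥ 1 there is ε with 0 ≤ ε ≤ b̄_{2m}(j) such that lim_{n→∞} EC_j(n) = Σ_{k=0}^{2m−1} (−1)^k b̄_k(j) + ε. -/
/-!
Exchanging the order of summation writes the double sum in `EC_j(n)` as
`∑_{k < n-j-1} (-1)^k A_k(n)`, where `A_k(n)` is the partial sum of part (a). Since `n q(n)`
converges, `q(n) = O(1/n)`; the `(i, k)` summand is at most `q(i-j) q(l)` for every
`i ≤ l ≤ k + i`. Taking `l = i` gives a summable majorant independent of `k`, hence (a), and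
taking `l = k + i` together with dominated convergence gives `b̄_k → 0`. For fixed `n` the
`A_k(n)` are nonnegative and decrease in `k`, so the alternating sum lies between its partial
sums of `2m` and `2m + 1` terms; these brackets pass to the limit `n → ∞` and squeeze the
alternating sums around the sum of the alternating series `∑ (-1)^k b̄_k`. The first term of
`EC_j(n)` is at most `q(n-j+1) → 0`.
-/

open Finset Filter Topology Asymptotics

theorem sum_Ico_alternating_mem_Icc {d : ℕ → ℝ} (hd0 : ∀ k, 0 ≤ d k) (hd : Antitone d)
    {a : ℕ} (ha : Even a) (r : ℕ) :
    ∑ k ∈ Ico a (a + r), (-1 : ℝ) ^ k * d k ∈ Set.Icc 0 (d a) := by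
  induction r using Nat.twoStepInduction generalizing a with
  | zero => simpa using hd0 a
  | one => simp [ha.neg_one_pow, hd0 a]
  | more r ih _ =>
    have hsplit : ∑ k ∈ Ico a (a + (r + 2)), (-1 : ℝ) ^ k * d k
        = d a - d (a + 1) + ∑ k ∈ Ico (a + 2) (a + 2 + r), (-1 : ℝ) ^ k * d k := by
      rw [sum_eq_sum_Ico_succ_bot (by omega), sum_eq_sum_Ico_succ_bot (by omega),
        show a + (r + 2) = a + 2 + r by omega, pow_succ, ha.neg_one_pow]
      ring
    obtain ⟨h0, h1⟩ := ih (ha.add even_two)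
    rw [hsplit]
    constructor <;> linarith [hd (Nat.le_succ a), hd (show a + 1 ≤ a + 2 by omega)]

theorem sum_range_alternating_sub_mem_Icc {d : ℕ → ℝ} (hd0 : ∀ k, 0 ≤ d k) (hd : Antitone d)
    {m N : ℕ} (h : 2 * m ≤ N) :
    ∑ k ∈ range N, (-1 : ℝ) ^ k * d k - ∑ k ∈ range (2 * m), (-1 : ℝ) ^ k * d k
      ∈ Set.Icc 0 (d (2 * m)) := by
  obtain ⟨r, rfl⟩ := Nat.exists_eq_add_of_le h
  rw [← sum_range_add_sum_Ico _ h, add_sub_cancel_left]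
  exact sum_Ico_alternating_mem_Icc hd0 hd (even_two_mul m) r

theorem exists_tendsto_sum_range_alternating {a : ℕ → ℕ → ℝ} {b : ℕ → ℝ} {K : ℕ → ℕ}
    (ha0 : ∀ k n, 0 ≤ a k n) (ha : ∀ n, Antitone (a · n))
    (hab : ∀ k, Tendsto (a k) atTop (𝓝 (b k))) (hb : Tendsto b atTop (𝓝 0))
    (hK : Tendsto K atTop atTop) :
    ∃ L, Tendsto (fun n => ∑ k ∈ range (K n), (-1 : ℝ) ^ k * a k n) atTop (𝓝 L) ∧
      ∀ m, ∑ k ∈ range (2 * m), (-1 : ℝ) ^ k * b k ≤ L ∧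
        L ≤ ∑ k ∈ range (2 * m), (-1 : ℝ) ^ k * b k + b (2 * m) := by
  have hb_anti : Antitone b := antitone_nat_of_succ_le fun k =>
    le_of_tendsto_of_tendsto' (hab (k + 1)) (hab k) fun n => ha n k.le_succ
  obtain ⟨L, hL⟩ := hb_anti.tendsto_alternating_series_of_tendsto_zero hb
  have hbounds (m : ℕ) : ∑ k ∈ range (2 * m), (-1 : ℝ) ^ k * b k ≤ L ∧
      L ≤ ∑ k ∈ range (2 * m), (-1 : ℝ) ^ k * b k + b (2 * m) := by
    refine ⟨hb_anti.alternating_series_le_tendsto hL m, ?_⟩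
    simpa [sum_range_succ] using hb_anti.tendsto_le_alternating_series hL m
  have hsmall {ε : ℝ} (hε : 0 < ε) : ∃ m, b (2 * m) < ε :=
    ((hb.comp (tendsto_id.const_mul_atTop' two_pos)).eventually (gt_mem_nhds hε)).exists
  have hrow (m : ℕ) : ∀ᶠ n in atTop, ∑ k ∈ range (K n), (-1 : ℝ) ^ k * a k n -
      ∑ k ∈ range (2 * m), (-1 : ℝ) ^ k * a k n ∈ Set.Icc 0 (a (2 * m) n) := by
    filter_upwards [hK.eventually_ge_atTop (2 * m)] with n hn
    exact sum_range_alternating_sub_mem_Icc (ha0 · n) (ha n) hn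
  have hpartial (m : ℕ) :=
    tendsto_finsetSum (range (2 * m)) fun k _ => (hab k).const_mul ((-1 : ℝ) ^ k)
  refine ⟨L, tendsto_order.2 ⟨fun c hc => ?_, fun c hc => ?_⟩, hbounds⟩
  · obtain ⟨m, hm⟩ := hsmall (sub_pos.2 hc)
    have hc' : c < ∑ k ∈ range (2 * m), (-1 : ℝ) ^ k * b k := by linarith [(hbounds m).2]
    filter_upwards [hrow m, (hpartial m).eventually (lt_mem_nhds hc')] with n hn hn'
    linarith [hn.1]
  · obtain ⟨m, hm⟩ := hsmall (sub_pos.2 hc)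
    have hc' : ∑ k ∈ range (2 * m), (-1 : ℝ) ^ k * b k + b (2 * m) < c := by
      linarith [(hbounds m).1]
    filter_upwards [hrow m, ((hpartial m).add (hab (2 * m))).eventually (gt_mem_nhds hc')]
      with n hn hn'
    linarith [hn.2]

theorem summable_sq_of_tendsto_natCast_mul {q : ℕ → ℝ} {α : ℝ}
    (h : Tendsto (fun n : ℕ => (n : ℝ) * q n) atTop (𝓝 α)) : Summable (fun n => q n ^ 2) := by
  refine summable_of_isBigO_nat (Real.summable_one_div_nat_pow.2 one_lt_two) ?_
  have hO : (fun n : ℕ => ((n : ℝ) * q n) ^ 2 * (1 / (n : ℝ) ^ 2)) =O[atTop]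
      fun n => 1 / (n : ℝ) ^ 2 := by
    simpa only [one_pow, one_mul] using
      ((h.isBigO_one ℝ).pow 2).mul (isBigO_refl (fun n : ℕ => 1 / (n : ℝ) ^ 2) _)
  refine hO.congr' ?_ EventuallyEq.rfl
  filter_upwards [eventually_ne_atTop 0] with n hn
  field_simp

theorem tendsto_zero_of_tendsto_natCast_mul {q : ℕ → ℝ} {α : ℝ}
    (h : Tendsto (fun n : ℕ => (n : ℝ) * q n) atTop (𝓝 α)) : Tendsto q atTop (𝓝 0) := by
  have := h.mul (tendsto_one_div_atTop_nhds_zero_nat)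
  rw [mul_zero] at this
  refine this.congr' ?_
  filter_upwards [eventually_ne_atTop 0] with n hn
  field_simp

theorem tendsto_mul_prod_zero {u p : ℕ → ℝ} {s : ℕ → Finset ℕ} (hu : Tendsto u atTop (𝓝 0))
    (hp : ∀ n, ∀ l ∈ s n, p l ∈ Set.Icc 0 1) :
    Tendsto (fun n => u n * ∏ l ∈ s n, p l) atTop (𝓝 0) := by
  refine squeeze_zero_norm (fun n => ?_) (tendsto_zero_iff_norm_tendsto_zero.1 hu)
  rw [norm_mul]
  refine mul_le_of_le_one_right (norm_nonneg _) ?_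
  rw [Real.norm_of_nonneg (prod_nonneg fun l hl => (hp n l hl).1)]
  exact prod_le_one (fun l hl => (hp n l hl).1) fun l hl => (hp n l hl).2

theorem mem_Icc_zero_one_of_pos {p : ℕ → ℝ} (hp1 : p 1 = 0) (hp2 : p 2 = 1)
    (hp : ∀ i, 3 ≤ i → 0 < p i ∧ p i < 1) {l : ℕ} (hl : 0 < l) : p l ∈ Set.Icc 0 1 := by
  obtain rfl | rfl | h3 := show l = 1 ∨ l = 2 ∨ 3 ≤ l by omega
  · simp [hp1]
  · simp [hp2]
  · exact ⟨(hp l h3).1.le, (hp l h3).2.le⟩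

def cycleTerm (p q : ℕ → ℝ) (j k i : ℕ) : ℝ :=
  q (i - j) * (∏ l ∈ Icc (i - j + 1) (i - 2), p l) * ∏ l ∈ Icc i (k + i), q l

def cycleSum (p q : ℕ → ℝ) (j k n : ℕ) : ℝ :=
  ∑ i ∈ Icc (j + 1) (n - k - 1), cycleTerm p q j k i

/-- The paper's `b̄_k(j)`. -/
noncomputable def cycleTsum (p q : ℕ → ℝ) (j k : ℕ) : ℝ :=
  ∑' t, cycleTerm p q j k (j + 1 + t)

section cycleTerm

variable {p q : ℕ → ℝ} {j k i n : ℕ}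

theorem cycleTerm_nonneg (hp : ∀ l, 0 < l → p l ∈ Set.Icc 0 1)
    (hq : ∀ l, 0 < l → q l ∈ Set.Icc 0 1) (hi : j < i) : 0 ≤ cycleTerm p q j k i := by
  refine mul_nonneg (mul_nonneg (hq _ (by omega)).1 (prod_nonneg fun l hl => ?_))
    (prod_nonneg fun l hl => ?_) <;> rw [mem_Icc] at hl
  exacts [(hp l (by omega)).1, (hq l (by omega)).1]

theorem cycleTerm_succ : cycleTerm p q j (k + 1) i = cycleTerm p q j k i * q (k + i + 1) := by
  rw [cycleTerm, cycleTerm, show k + 1 + i = k + i + 1 by omega,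
    prod_Icc_succ_top (by omega)]
  ring

theorem cycleTerm_succ_le (hp : ∀ l, 0 < l → p l ∈ Set.Icc 0 1)
    (hq : ∀ l, 0 < l → q l ∈ Set.Icc 0 1) (hi : j < i) :
    cycleTerm p q j (k + 1) i ≤ cycleTerm p q j k i := by
  rw [cycleTerm_succ]
  exact mul_le_of_le_one_right (cycleTerm_nonneg hp hq hi) (hq _ (by omega)).2

theorem cycleTerm_le (hp : ∀ l, 0 < l → p l ∈ Set.Icc 0 1)
    (hq : ∀ l, 0 < l → q l ∈ Set.Icc 0 1) (hi : j < i) {l : ℕ} (hl : l ∈ Icc i (k + i)) :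
    cycleTerm p q j k i ≤ q (i - j) * q l := by
  have hp_Icc : ∀ l ∈ Icc (i - j + 1) (i - 2), p l ∈ Set.Icc 0 1 := fun l hl =>
    hp l (by rw [mem_Icc] at hl; omega)
  have hq_Icc : ∀ l ∈ Icc i (k + i), q l ∈ Set.Icc 0 1 := fun l hl =>
    hq l (by rw [mem_Icc] at hl; omega)
  have hqij := hq (i - j) (by omega)
  have hP : ∏ l ∈ Icc (i - j + 1) (i - 2), p l ≤ 1 :=
    prod_le_one (fun l hl => (hp_Icc l hl).1) fun l hl => (hp_Icc l hl).2
  have hQ : ∏ l ∈ Icc i (k + i), q l ≤ q l := by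
    simpa using prod_le_prod_of_subset_of_le_one (singleton_subset_iff.2 hl)
      (fun l hl => (hq_Icc l hl).1) fun l hl _ => (hq_Icc l hl).2
  calc cycleTerm p q j k i ≤ q (i - j) * 1 * q l :=
        mul_le_mul (mul_le_mul_of_nonneg_left hP hqij.1) hQ
          (prod_nonneg fun l hl => (hq_Icc l hl).1) (by simpa using hqij.1)
    _ = q (i - j) * q l := by rw [mul_one]

theorem cycleTerm_le_sq_add_sq (hp : ∀ l, 0 < l → p l ∈ Set.Icc 0 1)
    (hq : ∀ l, 0 < l → q l ∈ Set.Icc 0 1) (t : ℕ) :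
    cycleTerm p q j k (j + 1 + t) ≤ (q (t + 1) ^ 2 + q (t + (j + 1)) ^ 2) / 2 := by
  have h := cycleTerm_le hp hq (k := k) (show j < j + 1 + t by omega) (left_mem_Icc.2 (by omega))
  rw [show j + 1 + t - j = t + 1 by omega] at h
  rw [show t + (j + 1) = j + 1 + t by omega]
  linarith [two_mul_le_add_sq (q (t + 1)) (q (j + 1 + t))]

theorem summable_sq_shift_add_sq_shift (hq2 : Summable fun l => q l ^ 2) :
    Summable fun t => (q (t + 1) ^ 2 + q (t + (j + 1)) ^ 2) / 2 :=
  (((summable_nat_add_iff 1).2 hq2).add ((summable_nat_add_iff (j + 1)).2 hq2)).div_const 2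

theorem summable_cycleTerm (hp : ∀ l, 0 < l → p l ∈ Set.Icc 0 1)
    (hq : ∀ l, 0 < l → q l ∈ Set.Icc 0 1) (hq2 : Summable fun l => q l ^ 2) :
    Summable fun t => cycleTerm p q j k (j + 1 + t) :=
  .of_nonneg_of_le (fun t => cycleTerm_nonneg hp hq (by omega)) (cycleTerm_le_sq_add_sq hp hq)
    (summable_sq_shift_add_sq_shift hq2)

theorem tendsto_cycleTerm_zero (hp : ∀ l, 0 < l → p l ∈ Set.Icc 0 1)
    (hq : ∀ l, 0 < l → q l ∈ Set.Icc 0 1) (hq0 : Tendsto q atTop (𝓝 0)) (hi : j < i) :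
    Tendsto (fun k => cycleTerm p q j k i) atTop (𝓝 0) := by
  have hbound : Tendsto (fun k => q (i - j) * q (k + i)) atTop (𝓝 0) := by
    simpa using (hq0.comp (tendsto_add_atTop_nat i)).const_mul (q (i - j))
  exact tendsto_of_tendsto_of_tendsto_of_le_of_le tendsto_const_nhds hbound
    (fun k => cycleTerm_nonneg hp hq hi) fun k => cycleTerm_le hp hq hi (by simp)

theorem cycleSum_eq_sum_range :
    cycleSum p q j k n = ∑ t ∈ range (n - (k + 1 + j)), cycleTerm p q j k (j + 1 + t) := by
  rw [cycleSum, ← Ico_add_one_right_eq_Icc, sum_Ico_eq_sum_range,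
    show n - k - 1 + 1 - (j + 1) = n - (k + 1 + j) by omega]

theorem tendsto_cycleSum (hp : ∀ l, 0 < l → p l ∈ Set.Icc 0 1)
    (hq : ∀ l, 0 < l → q l ∈ Set.Icc 0 1) (hq2 : Summable fun l => q l ^ 2) :
    Tendsto (cycleSum p q j k) atTop (𝓝 (cycleTsum p q j k)) := by
  have h := (summable_cycleTerm (j := j) (k := k) hp hq hq2).hasSum.tendsto_sum_nat.comp
    (tendsto_sub_atTop_nat (k + 1 + j))
  exact h.congr fun n => cycleSum_eq_sum_range.symm

theorem cycleSum_nonneg (hp : ∀ l, 0 < l → p l ∈ Set.Icc 0 1)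
    (hq : ∀ l, 0 < l → q l ∈ Set.Icc 0 1) : 0 ≤ cycleSum p q j k n :=
  sum_nonneg fun i hi => cycleTerm_nonneg hp hq (by rw [mem_Icc] at hi; omega)

theorem cycleSum_antitone (hp : ∀ l, 0 < l → p l ∈ Set.Icc 0 1)
    (hq : ∀ l, 0 < l → q l ∈ Set.Icc 0 1) : Antitone (cycleSum p q j · n) := by
  refine antitone_nat_of_succ_le fun k => ?_
  calc cycleSum p q j (k + 1) n ≤ ∑ i ∈ Icc (j + 1) (n - (k + 1) - 1), cycleTerm p q j k i :=
        sum_le_sum fun i hi => cycleTerm_succ_le hp hq (by rw [mem_Icc] at hi; omega)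
    _ ≤ cycleSum p q j k n :=
        sum_le_sum_of_subset_of_nonneg (Icc_subset_Icc le_rfl (by omega))
          fun i hi _ => cycleTerm_nonneg hp hq (by rw [mem_Icc] at hi; omega)

theorem tendsto_cycleTsum_zero (hp : ∀ l, 0 < l → p l ∈ Set.Icc 0 1)
    (hq : ∀ l, 0 < l → q l ∈ Set.Icc 0 1) (hq0 : Tendsto q atTop (𝓝 0))
    (hq2 : Summable fun l => q l ^ 2) : Tendsto (cycleTsum p q j) atTop (𝓝 0) := by
  have h := tendsto_tsum_of_dominated_convergence (summable_sq_shift_add_sq_shift hq2)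
    (fun t => tendsto_cycleTerm_zero hp hq hq0 (by omega : j < j + 1 + t))
    (.of_forall fun k t => by
      rw [Real.norm_of_nonneg (cycleTerm_nonneg hp hq (by omega))]
      exact cycleTerm_le_sq_add_sq hp hq t)
  rwa [tsum_zero] at h

theorem sum_sum_cycleTerm_comm :
    ∑ i ∈ Icc (j + 1) (n - 1), ∑ k ∈ range (n - i), (-1 : ℝ) ^ k * cycleTerm p q j k i =
      ∑ k ∈ range (n - j - 1), (-1 : ℝ) ^ k * cycleSum p q j k n := by
  simp_rw [cycleSum, mul_sum]
  exact sum_comm' fun i k => by simp only [mem_Icc, mem_range]; omega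

end cycleTerm

theorem stmt4_general (p q : ℕ → ℝ)
    (hp1 : p 1 = 0) (hp2 : p 2 = 1) (hp : ∀ i, 3 ≤ i → 0 < p i ∧ p i < 1)
    (hq : ∀ i, q i = 1 - p i)
    (EC : ℕ → ℕ → ℝ)
    (hEC : ∀ j n : ℕ, EC j n =
      q (n - j + 1) * ∏ l ∈ Finset.Icc (n - j + 2) (n - 1), p l
      + ∑ i ∈ Finset.Icc (j + 1) (n - 1), ∑ k ∈ Finset.range (n - i),
          (-1 : ℝ) ^ k * q (i - j) * (∏ l ∈ Finset.Icc (i - j + 1) (i - 2), p l)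
            * ∏ l ∈ Finset.Icc i (k + i), q l)
    (α : ℝ)
    (hlim : Tendsto (fun n : ℕ => (n : ℝ) * q n) atTop (nhds α)) :
    ∀ j : ℕ, 1 < j →
      ∃ b : ℕ → ℝ,
        (∀ k : ℕ, Tendsto (fun n : ℕ =>
            ∑ i ∈ Finset.Icc (j + 1) (n - k - 1),
              q (i - j) * (∏ l ∈ Finset.Icc (i - j + 1) (i - 2), p l)
                * ∏ l ∈ Finset.Icc i (k + i), q l) atTop (nhds (b k))) ∧
        ∃ L : ℝ, Tendsto (fun n : ℕ => EC j n) atTop (nhds L) ∧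
          ∀ m : ℕ, 1 ≤ m → ∃ ε : ℝ, 0 ≤ ε ∧ ε ≤ b (2 * m) ∧
            L = (∑ k ∈ Finset.range (2 * m), (-1 : ℝ) ^ k * b k) + ε := by
  intro j _
  have hp' (l : ℕ) (hl : 0 < l) := mem_Icc_zero_one_of_pos hp1 hp2 hp hl
  have hq' (l : ℕ) (hl : 0 < l) : q l ∈ Set.Icc 0 1 :=
    hq l ▸ Set.Icc.mem_iff_one_sub_mem.1 (hp' l hl)
  have hq0 := tendsto_zero_of_tendsto_natCast_mul hlim
  have hq2 := summable_sq_of_tendsto_natCast_mul hlim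
  obtain ⟨L, hL, hbounds⟩ := exists_tendsto_sum_range_alternating
    (a := cycleSum p q j) (b := cycleTsum p q j) (K := fun n => n - j - 1)
    (fun k n => cycleSum_nonneg hp' hq') (fun n => cycleSum_antitone hp' hq')
    (fun k => tendsto_cycleSum hp' hq' hq2) (tendsto_cycleTsum_zero hp' hq' hq0 hq2)
    ((tendsto_sub_atTop_nat 1).comp (tendsto_sub_atTop_nat j))
  have hboundary := tendsto_mul_prod_zero (u := fun n => q (n - j + 1))
    (s := fun n => Icc (n - j + 2) (n - 1))
    (hq0.comp ((tendsto_add_atTop_nat 1).comp (tendsto_sub_atTop_nat j)))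
    fun n l hl => hp' l (by rw [mem_Icc] at hl; omega)
  refine ⟨cycleTsum p q j, fun k => tendsto_cycleSum hp' hq' hq2, L, ?_, fun m _ =>
    ⟨L - ∑ k ∈ range (2 * m), (-1 : ℝ) ^ k * cycleTsum p q j k,
      by linarith [hbounds m], by linarith [hbounds m], by ring⟩⟩
  have hEC' (n : ℕ) : EC j n = q (n - j + 1) * ∏ l ∈ Icc (n - j + 2) (n - 1), p l +
      ∑ k ∈ range (n - j - 1), (-1 : ℝ) ^ k * cycleSum p q j k n := by
    rw [hEC, ← sum_sum_cycleTerm_comm]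
    simp only [cycleTerm, mul_assoc]
  simpa only [hEC', zero_add] using hboundary.add hL

/-- asymptotics of the expected number of `j`-cycles of the
random-derangement chain `X^{n,p}`. -/
theorem stmt4 (p q : ℕ → ℝ)
    (hp1 : p 1 = 0) (hp2 : p 2 = 1) (hp : ∀ i, 3 ≤ i → 0 < p i ∧ p i < 1)
    (hq : ∀ i, q i = 1 - p i)
    (EC : ℕ → ℕ → ℝ)
    (hEC : ∀ j n : ℕ, EC j n =
      q (n - j + 1) * ∏ l ∈ Finset.Icc (n - j + 2) (n - 1), p l
      + ∑ i ∈ Finset.Icc (j + 1) (n - 1), ∑ k ∈ Finset.range (n - i),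
          (-1 : ℝ) ^ k * q (i - j) * (∏ l ∈ Finset.Icc (i - j + 1) (i - 2), p l)
            * ∏ l ∈ Finset.Icc i (k + i), q l)
    (α : ℝ) (hα : 0 ≤ α)
    (hlim : Tendsto (fun n : ℕ => (n : ℝ) * q n) atTop (nhds α)) :
    ∀ j : ℕ, 1 < j →
      ∃ b : ℕ → ℝ,
        (∀ k : ℕ, Tendsto (fun n : ℕ =>
            ∑ i ∈ Finset.Icc (j + 1) (n - k - 1),
              q (i - j) * (∏ l ∈ Finset.Icc (i - j + 1) (i - 2), p l)
                * ∏ l ∈ Finset.Icc i (k + i), q l) atTop (nhds (b k))) ∧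
        ∃ L : ℝ, Tendsto (fun n : ℕ => EC j n) atTop (nhds L) ∧
          ∀ m : ℕ, 1 ≤ m → ∃ ε : ℝ, 0 ≤ ε ∧ ε ≤ b (2 * m) ∧
            L = (∑ k ∈ Finset.range (2 * m), (-1 : ℝ) ^ k * b k) + ε :=
  stmt4_general p q hp1 hp2 hp hq EC hEC α hlim
end

section
/- Let θ : ℕ → ℝ with θ_1 = 1 and θ_i > 0 for all i, and let γ be defined by γ_1 = 0, γ_2 = 1/(1+θ_2), and γ_i = ((i−1)/(i−1+θ_i))·( γ_{i−1} + (θ_{i−1}/(i−2+θ_{i−1}))·γ_{i−2} ) for i ≥ 3. Define G_0 = 0, G_1 = G_2 = 1, and for i ≥ 3, G_i := 1 + Σ_{k=1}^{⌊(i−1)/2⌋} Σ_{(i_1,…,i_k)} Π_{j=1}^{k} θ_{i_j}/(i_j − 1), where the inner sum ranges over all k-tuples of integers with 2 < i_j ≤ i for every j and i_{j+1} > i_j + 1 for 1 ≤ j < k. Then for every i ≥ 2, γ_i = G_{i−1} · (i−1)! / θ_{<i>}, where θ_{<n>} := Π_{k=1}^{n} (θ_k + k − 1). -/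
/-!
Splitting the nonconsecutive subsets of `{3, …, m}` according to whether they contain `m` gives
`G_m = G_{m-1} + θ_m / (m - 1) · G_{m-2}`, and with `G_0 = 0` this holds from `m = 2` on.
Multiplying the recursion for `γ` by `θ_{⟨i⟩} / (i - 1)!` turns it into the same recursion for
`γ_i θ_{⟨i⟩} / (i - 1)!`, shifted by one, and both sequences start with `0, 1` at `i = 1, 2`.
-/

open Finset

def nonconsecutiveSubsets (l m : ℕ) : Finset (Finset ℕ) :=
  (Icc l m).powerset.filter fun s => ∀ a ∈ s, a + 1 ∉ s

section

variable {l m : ℕ} {s : Finset ℕ}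

theorem mem_nonconsecutiveSubsets :
    s ∈ nonconsecutiveSubsets l m ↔ s ⊆ Icc l m ∧ ∀ a ∈ s, a + 1 ∉ s := by
  simp [nonconsecutiveSubsets]

theorem nonconsecutiveSubsets_of_lt (h : m < l) : nonconsecutiveSubsets l m = {∅} := by
  ext s
  simp only [mem_nonconsecutiveSubsets, Icc_eq_empty_of_lt h, subset_empty, mem_singleton]
  exact ⟨And.left, fun hs => ⟨hs, by simp [hs]⟩⟩

theorem notMem_of_mem_nonconsecutiveSubsets_of_lt (hs : s ∈ nonconsecutiveSubsets l m) {a : ℕ}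
    (ha : m < a) : a ∉ s := fun h => by
  have := mem_Icc.1 ((mem_nonconsecutiveSubsets.1 hs).1 h)
  omega

theorem card_le_of_mem_nonconsecutiveSubsets (hs : s ∈ nonconsecutiveSubsets l m) :
    s.card ≤ (m + 2 - l) / 2 := by
  obtain ⟨hsub, hgap⟩ := mem_nonconsecutiveSubsets.1 hs
  have hbounds : ∀ a ∈ s, l ≤ a ∧ a ≤ m := fun a ha => mem_Icc.1 (hsub ha)
  have hmono : StrictMonoOn (fun a => (a - l) / 2) s := by
    intro a ha b hb hab
    have : a + 1 ≠ b := fun e => hgap a ha (e ▸ hb)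
    have := hbounds a ha
    dsimp only
    omega
  calc s.card = (s.image fun a => (a - l) / 2).card := (card_image_of_injOn hmono.injOn).symm
    _ ≤ (range ((m + 2 - l) / 2)).card := by
        refine card_le_card fun x hx => ?_
        obtain ⟨a, ha, rfl⟩ := mem_image.1 hx
        have := hbounds a ha
        rw [mem_range]
        omega
    _ = (m + 2 - l) / 2 := card_range _

theorem nonconsecutiveSubsets_add_two (h : l ≤ m + 2) :
    nonconsecutiveSubsets l (m + 2) =
      nonconsecutiveSubsets l (m + 1) ∪ (nonconsecutiveSubsets l m).image (insert (m + 2)) := by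
  ext s
  simp only [mem_union, mem_image, mem_nonconsecutiveSubsets, subset_iff, mem_Icc]
  constructor
  · rintro ⟨hsub, hgap⟩
    by_cases htop : m + 2 ∈ s
    · refine Or.inr ⟨s.erase (m + 2), ⟨fun a ha => ?_, fun a ha h => ?_⟩, insert_erase htop⟩
      · obtain ⟨hne, ha⟩ := mem_erase.1 ha
        have : a ≠ m + 1 := by rintro rfl; exact hgap _ ha htop
        have := hsub ha
        omega
      · exact hgap a (mem_of_mem_erase ha) (mem_of_mem_erase h)
    · refine Or.inl ⟨fun a ha => ?_, hgap⟩
      have : a ≠ m + 2 := by rintro rfl; exact htop ha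
      have := hsub ha
      omega
  · rintro (⟨hsub, hgap⟩ | ⟨t, ⟨hsub, hgap⟩, rfl⟩)
    · exact ⟨fun a ha => by have := hsub ha; omega, hgap⟩
    · refine ⟨fun a ha => ?_, fun a ha h => ?_⟩
      · rcases mem_insert.1 ha with rfl | ha
        · omega
        · have := hsub ha; omega
      · rcases mem_insert.1 ha with rfl | ha <;> rcases mem_insert.1 h with h | h
        · omega
        · have := hsub h; omega
        · have := hsub ha; omega
        · exact hgap a ha h

end

section

variable {R : Type*} [CommSemiring R] (w : ℕ → R) {l m : ℕ}

def nonconsecutiveSum (l m : ℕ) : R :=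
  ∑ s ∈ nonconsecutiveSubsets l m, ∏ a ∈ s, w a

theorem nonconsecutiveSum_of_lt (h : m < l) : nonconsecutiveSum w l m = 1 := by
  simp [nonconsecutiveSum, nonconsecutiveSubsets_of_lt h]

theorem nonconsecutiveSum_add_two (h : l ≤ m + 2) :
    nonconsecutiveSum w l (m + 2) =
      nonconsecutiveSum w l (m + 1) + w (m + 2) * nonconsecutiveSum w l m := by
  have htop : ∀ t ∈ nonconsecutiveSubsets l m, m + 2 ∉ t := fun t ht =>
    notMem_of_mem_nonconsecutiveSubsets_of_lt ht (by omega)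
  have hdisj : Disjoint (nonconsecutiveSubsets l (m + 1))
      ((nonconsecutiveSubsets l m).image (insert (m + 2))) := by
    refine disjoint_left.2 fun s hs hs' => ?_
    obtain ⟨t, -, rfl⟩ := mem_image.1 hs'
    exact notMem_of_mem_nonconsecutiveSubsets_of_lt hs (by omega) (mem_insert_self _ t)
  have hinj : Set.InjOn (insert (m + 2)) (nonconsecutiveSubsets l m : Set (Finset ℕ)) := by
    intro s hs t ht hst
    rw [← erase_insert (htop s hs), ← erase_insert (htop t ht)]
    exact congrArg (·.erase (m + 2)) hst
  rw [nonconsecutiveSum, nonconsecutiveSubsets_add_two h, sum_union hdisj,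
    sum_image hinj, nonconsecutiveSum, nonconsecutiveSum, mul_sum]
  congr 1
  exact sum_congr rfl fun t ht => prod_insert (htop t ht)

theorem nonconsecutiveSum_eq_one_add_sum_card :
    nonconsecutiveSum w l m = 1 + ∑ k ∈ Icc 1 ((m + 2 - l) / 2),
      ∑ s ∈ (Icc l m).powerset.filter (fun s => s.card = k ∧ ∀ a ∈ s, a + 1 ∉ s),
        ∏ a ∈ s, w a := by
  have hfiber : ∀ k, (nonconsecutiveSubsets l m).filter (fun s => s.card = k) =
      (Icc l m).powerset.filter (fun s => s.card = k ∧ ∀ a ∈ s, a + 1 ∉ s) := fun k => by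
    simp only [nonconsecutiveSubsets, filter_filter, and_comm]
  have hempty : (nonconsecutiveSubsets l m).filter (fun s => s.card = 0) = {∅} := by
    ext s
    simp only [mem_filter, card_eq_zero, mem_singleton, and_iff_right_iff_imp]
    rintro rfl
    simp [nonconsecutiveSubsets]
  rw [nonconsecutiveSum, ← sum_fiberwise_of_maps_to (t := Icc 0 ((m + 2 - l) / 2))
    (g := card) fun s hs => mem_Icc.2 ⟨Nat.zero_le _, card_le_of_mem_nonconsecutiveSubsets hs⟩,
    ← insert_Icc_add_one_left_eq_Icc (Nat.zero_le _), sum_insert (by simp), hempty]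
  simp only [sum_singleton, prod_empty, hfiber, zero_add]

end

/-- The paper's `θ_{⟨n⟩}`. -/
def risingProd (θ : ℕ → ℝ) (n : ℕ) : ℝ :=
  ∏ k ∈ Icc 1 n, (θ k + k - 1)

section

variable {θ : ℕ → ℝ}

theorem risingProd_succ (n : ℕ) : risingProd θ (n + 1) = risingProd θ n * (θ (n + 1) + n) := by
  rw [risingProd, prod_Icc_succ_top (Nat.le_add_left 1 n), ← risingProd]
  push_cast
  ring

theorem risingProd_pos (hθ : ∀ i, 1 ≤ i → 0 < θ i) (n : ℕ) : 0 < risingProd θ n :=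
  prod_pos fun k hk => by
    have hk := (mem_Icc.1 hk).1
    have : (1 : ℝ) ≤ k := by exact_mod_cast hk
    linarith [hθ k hk]

theorem closedForm_add_two (hθ : ∀ i, 1 ≤ i → 0 < θ i) {n : ℕ} {γ₀ γ₁ g₀ g₁ : ℝ}
    (h₀ : γ₀ = g₀ * n.factorial / risingProd θ (n + 1))
    (h₁ : γ₁ = g₁ * (n + 1).factorial / risingProd θ (n + 2)) :
    (n + 2) / (n + 2 + θ (n + 3)) * (γ₁ + θ (n + 2) / (n + 1 + θ (n + 2)) * γ₀) =
      (g₁ + θ (n + 2) / (n + 1) * g₀) * (n + 2).factorial / risingProd θ (n + 3) := by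
  have h₂ := hθ (n + 2) (by omega)
  have h₃ := hθ (n + 3) (by omega)
  have hΘ := risingProd_pos hθ (n + 1)
  rw [h₀, h₁, risingProd_succ (n + 2), risingProd_succ (n + 1), Nat.factorial_succ (n + 1),
    Nat.factorial_succ n]
  push_cast
  field_simp
  ring

end

/-- closed form for the no-adjacent-ones probabilities `γ_i` of the
generalized Feller coupling, in terms of the polynomials `G_i(θ)`. -/
theorem stmt8 (θ : ℕ → ℝ) (hθ1 : θ 1 = 1) (hθpos : ∀ i, 1 ≤ i → 0 < θ i)
    (γ : ℕ → ℝ) (hγ1 : γ 1 = 0) (hγ2 : γ 2 = 1 / (1 + θ 2))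
    (hγrec : ∀ i : ℕ, 3 ≤ i →
      γ i = (((i : ℝ) - 1) / ((i : ℝ) - 1 + θ i))
        * (γ (i - 1) + (θ (i - 1) / ((i : ℝ) - 2 + θ (i - 1))) * γ (i - 2)))
    (G : ℕ → ℝ) (hG0 : G 0 = 0)
    (hG : ∀ i : ℕ, 1 ≤ i →
      G i = 1 + ∑ k ∈ Finset.Icc 1 ((i - 1) / 2),
        ∑ s ∈ (Finset.Icc 3 i).powerset.filter
            (fun s => s.card = k ∧ ∀ a ∈ s, a + 1 ∉ s),
          ∏ a ∈ s, θ a / ((a : ℝ) - 1)) :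
    ∀ i : ℕ, 2 ≤ i →
      γ i = G (i - 1) * ((i - 1).factorial : ℝ)
        / ∏ k ∈ Finset.Icc 1 i, (θ k + (k : ℝ) - 1) := by
  have hG_eq : ∀ m, 1 ≤ m → G m = nonconsecutiveSum (fun a => θ a / ((a : ℝ) - 1)) 3 m :=
    fun m hm => by rw [hG m hm, nonconsecutiveSum_eq_one_add_sum_card, Nat.add_sub_add_right m 2 1]
  have hG1 : G 1 = 1 := by rw [hG_eq 1 le_rfl, nonconsecutiveSum_of_lt _ (by norm_num)]
  have hG_add_two : ∀ m, G (m + 2) = G (m + 1) + θ (m + 2) / (m + 1) * G m := by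
    rintro (_ | m)
    · rw [hG_eq 2 (by norm_num), nonconsecutiveSum_of_lt _ (by norm_num), hG1, hG0, mul_zero,
        add_zero]
    · rw [hG_eq _ (by omega), hG_eq _ (by omega), hG_eq _ (by omega),
        nonconsecutiveSum_add_two _ (by omega)]
      push_cast
      ring
  have hclosed : ∀ n, γ (n + 1) = G n * n.factorial / risingProd θ (n + 1) := by
    intro n
    induction n using Nat.twoStepInduction with
    | zero => simp [hγ1, hG0]
    | one =>
      rw [hγ2, hG1, risingProd_succ, risingProd_succ, risingProd, hθ1]
      simp [add_comm]
    | more n ih₀ ih₁ =>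
      rw [hγrec (n + 2 + 1) (by omega), hG_add_two, ← closedForm_add_two hθpos ih₀ ih₁]
      push_cast
      ring_nf
  intro i hi
  obtain ⟨n, rfl⟩ := Nat.exists_eq_add_of_le' hi
  exact hclosed (n + 1)
end

section
/- Fix n ≥ 4. Let p : ℕ → ℝ with p(1) = 0, p(2) = 1, 0 < p(i) < 1 for i ≥ 3, q(i) := 1 − p(i), and let θ : ℕ → ℝ with θ_1 = 1 and θ_i > 0 for all i. Let Δ_n be the set of a : {1,…,n} → {0,1} with a(1) = 1, a(n) = 0 and a(i)·a(i+1) = 0 for 1 ≤ i ≤ n−1. For a ∈ Δ_n define μ_n(a) := Π_{i=1}^{n−1} t_i(a), where t_i(a) = 1 if a(i+1) = 1, t_i(a) = p(i) if a(i+1) = 0 and a(i) = 0, and t_i(a) = q(i) if a(i+1) = 0 and a(i) = 1; define ν_n(a) := Π_{i=1}^{n} b_i(a(i)) with b_i(1) = θ_i/(i−1+θ_i) and b_i(0) = (i−1)/(i−1+θ_i), and γ_n := Σ_{a ∈ Δ_n} ν_n(a). Then the following are equivalent: (i) μ_n(a) = ν_n(a)/γ_n for every a ∈ Δ_n; (ii)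 p(i) = (i−1+θ_i)·γ_i / ( (i−1+θ_i)·γ_i + θ_i·γ_{i−1} ) for all 3 ≤ i ≤ n−1, where γ_i := Σ_{a ∈ Δ_i} ν_i(a); (iii) θ_i = (i−1)·q(i)/(p(i)·p(i−1)) for all 3 ≤ i ≤ n−1. -/
/-!
Splitting `Δ_{k+2}` according to whether `k + 1` carries a one gives the recursion
`γ_{k+2} = b_{k+2}(0) (γ_{k+1} + b_{k+1}(1) γ_k)`, under which the right-hand side of (ii) equals
`b_{i+1}(0) γ_i / γ_{i+1}`. For this `p` the factors of `μ_n` and of `ν_n / γ_n` match along the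
same splitting, which gives (ii) ⇒ (i). Comparing the masses of `{1}` and `{1, i}` under (i)
gives (iii). Finally, the recursion shows that the values of (ii) satisfy (iii) identically, while
(iii) determines `p i` from `p (i - 1)`; hence (ii) ⇔ (iii) by induction from `p 2 = 1`.
-/

open Finset Filter

/-- Binary strings of length `n` (encoded by their set of `1`-positions, a subset of
`{1,…,n}`) with `a 1 = 1`, `a n = 0` and no two adjacent ones. -/
def derSet (n : ℕ) : Finset (Finset ℕ) :=
  (Finset.Icc 1 n).powerset.filter (fun s => 1 ∈ s ∧ n ∉ s ∧ ∀ i ∈ s, i + 1 ∉ s)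

/-- Mass function of the random-derangement Markov chain `X^{n,p}` on `derSet n`. -/
noncomputable def muD (p q : ℕ → ℝ) (n : ℕ) (s : Finset ℕ) : ℝ :=
  ∏ i ∈ Finset.Icc 1 (n - 1), if i + 1 ∈ s then 1 else if i ∈ s then q i else p i

/-- Mass function of the generalized Feller coupling `(Y_n, …, Y_1)`,
`P(Y_i = 1) = θ_i/(i-1+θ_i)`. -/
noncomputable def nuD (θ : ℕ → ℝ) (n : ℕ) (s : Finset ℕ) : ℝ :=
  ∏ i ∈ Finset.Icc 1 n,
    if i ∈ s then θ i / ((i : ℝ) - 1 + θ i) else ((i : ℝ) - 1) / ((i : ℝ) - 1 + θ i)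

/-- `γ_n(θ) = P((Y_n,…,Y_1) ∈ Δ_n)`. -/
noncomputable def gamD (θ : ℕ → ℝ) (n : ℕ) : ℝ := ∑ s ∈ derSet n, nuD θ n s

lemma mem_derSet {n : ℕ} {s : Finset ℕ} :
    s ∈ derSet n ↔ s ⊆ Icc 1 n ∧ 1 ∈ s ∧ n ∉ s ∧ ∀ i ∈ s, i + 1 ∉ s := by
  simp [derSet]

lemma mem_Icc_of_mem_derSet {n : ℕ} {s : Finset ℕ} (hs : s ∈ derSet n) {i : ℕ} (hi : i ∈ s) :
    1 ≤ i ∧ i ≤ n :=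
  mem_Icc.1 ((mem_derSet.1 hs).1 hi)

lemma notMem_of_mem_derSet {n : ℕ} {s : Finset ℕ} (hs : s ∈ derSet n) {i : ℕ} (hi : n < i) :
    i ∉ s :=
  fun h => by have := mem_Icc_of_mem_derSet hs h; omega

lemma derSet_eq_empty {n : ℕ} (hn : n ≤ 1) : derSet n = ∅ := by
  refine eq_empty_of_forall_notMem fun s hs => ?_
  obtain ⟨-, h1, hn1, -⟩ := mem_derSet.1 hs
  have := (mem_Icc_of_mem_derSet hs h1).2
  exact hn1 (by rwa [show n = 1 by omega])

lemma singleton_one_mem_derSet {n : ℕ} (hn : 2 ≤ n) : ({1} : Finset ℕ) ∈ derSet n :=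
  mem_derSet.2 ⟨by simp; omega, by simp, by simp; omega, by simp⟩

lemma pair_mem_derSet {n i : ℕ} (hi : 3 ≤ i) (hin : i < n) : ({1, i} : Finset ℕ) ∈ derSet n :=
  mem_derSet.2 ⟨by simp [insert_subset_iff]; omega, by simp, by simp; omega, by simp; omega⟩

lemma derSet_two : derSet 2 = {{1}} := by
  refine eq_singleton_iff_unique_mem.2 ⟨singleton_one_mem_derSet le_rfl, fun s hs => ?_⟩
  obtain ⟨-, h1, h2, -⟩ := mem_derSet.1 hs
  refine Subset.antisymm (fun i hi => ?_) (singleton_subset_iff.2 h1)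
  have := mem_Icc_of_mem_derSet hs hi
  have : i ≠ 2 := by rintro rfl; exact h2 hi
  rw [mem_singleton]; omega

lemma derSet_filter_notMem (k : ℕ) :
    (derSet (k + 2)).filter (k + 1 ∉ ·) = derSet (k + 1) := by
  ext s
  simp only [mem_filter, mem_derSet]
  constructor
  · rintro ⟨⟨hsub, h1, htop, hadj⟩, hk⟩
    refine ⟨fun i hi => ?_, h1, hk, hadj⟩
    have := mem_Icc.1 (hsub hi)
    have : i ≠ k + 1 := by rintro rfl; exact hk hi
    have : i ≠ k + 2 := by rintro rfl; exact htop hi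
    rw [mem_Icc]; omega
  · rintro ⟨hsub, h1, hk, hadj⟩
    refine ⟨⟨hsub.trans (Icc_subset_Icc_right (by omega)), h1, fun h => ?_, hadj⟩, hk⟩
    have := mem_Icc.1 (hsub h); omega

lemma derSet_filter_mem {k : ℕ} (hk : 1 ≤ k) :
    (derSet (k + 2)).filter (k + 1 ∈ ·) = (derSet k).image (insert (k + 1)) := by
  ext s
  simp only [mem_filter, mem_image]
  constructor
  · rintro ⟨hs, hks⟩
    refine ⟨s.erase (k + 1), ?_, insert_erase hks⟩
    obtain ⟨hsub, h1, htop, hadj⟩ := mem_derSet.1 hs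
    refine mem_derSet.2 ⟨fun i hi => ?_, mem_erase.2 ⟨by omega, h1⟩,
      fun h => hadj k (mem_of_mem_erase h) hks,
      fun i hi h => hadj i (mem_of_mem_erase hi) (mem_of_mem_erase h)⟩
    have := mem_Icc.1 (hsub (mem_of_mem_erase hi))
    have := ne_of_mem_erase hi
    have : i ≠ k + 2 := by rintro rfl; exact htop (mem_of_mem_erase hi)
    rw [mem_Icc]; omega
  · rintro ⟨t, ht, rfl⟩
    have hbound := fun i => mem_Icc_of_mem_derSet ht (i := i)
    obtain ⟨-, h1, hk, hadj⟩ := mem_derSet.1 ht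
    refine ⟨mem_derSet.2 ⟨insert_subset (by simp) fun i hi => ?_, mem_insert_of_mem h1, ?_, ?_⟩,
      mem_insert_self _ _⟩
    · have := hbound i hi; rw [mem_Icc]; omega
    · rw [mem_insert, not_or]
      exact ⟨by omega, notMem_of_mem_derSet ht (by omega)⟩
    · intro i hi hi'
      rw [mem_insert] at hi hi'
      rcases hi with rfl | hi
      · rcases hi' with h | h
        · omega
        · exact notMem_of_mem_derSet ht (by omega) h
      · rcases hi' with h | h
        · exact hk (by rwa [show k = i by omega])
        · exact hadj i hi h

lemma prod_mul_prod_eq_of_eqOn_sdiff {ι M : Type*} [DecidableEq ι] [CommMonoid M]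
    {I T : Finset ι} {f g : ι → M} (hT : T ⊆ I) (hfg : ∀ i ∈ I \ T, f i = g i) :
    (∏ i ∈ I, f i) * ∏ i ∈ T, g i = (∏ i ∈ I, g i) * ∏ i ∈ T, f i := by
  rw [← prod_sdiff hT (f := f), ← prod_sdiff hT (f := g), prod_congr rfl hfg]
  exact mul_right_comm _ _ _

-- `b_i(1)` and `b_i(0)`
noncomputable def fellerOne (θ : ℕ → ℝ) (i : ℕ) : ℝ := θ i / ((i : ℝ) - 1 + θ i)

noncomputable def fellerZero (θ : ℕ → ℝ) (i : ℕ) : ℝ := ((i : ℝ) - 1) / ((i : ℝ) - 1 + θ i)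

-- the right-hand side of (ii)
noncomputable def fellerStay (θ : ℕ → ℝ) (i : ℕ) : ℝ :=
  ((i : ℝ) - 1 + θ i) * gamD θ i / (((i : ℝ) - 1 + θ i) * gamD θ i + θ i * gamD θ (i - 1))

section Products

variable (p q θ : ℕ → ℝ) {k n : ℕ} {s : Finset ℕ}

lemma nuD_congr {t : Finset ℕ} (h : ∀ i ≤ n, i ∈ s ↔ i ∈ t) : nuD θ n s = nuD θ n t :=
  prod_congr rfl fun i hi => by simp only [h i (mem_Icc.1 hi).2]

lemma muD_congr {t : Finset ℕ} (h : ∀ i ≤ n, i ∈ s ↔ i ∈ t) : muD p q n s = muD p q n t :=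
  prod_congr rfl fun i hi => by
    have := mem_Icc.1 hi
    simp only [h (i + 1) (by omega), h i (by omega)]

lemma nuD_succ : nuD θ (k + 1) s =
    nuD θ k s * if k + 1 ∈ s then fellerOne θ (k + 1) else fellerZero θ (k + 1) :=
  prod_Icc_succ_top (by omega) _

lemma muD_succ : muD p q (k + 2) s =
    muD p q (k + 1) s * if k + 2 ∈ s then 1 else if k + 1 ∈ s then q (k + 1) else p (k + 1) :=
  prod_Icc_succ_top (by omega) _

lemma nuD_succ_of_mem_derSet (hs : s ∈ derSet (k + 1)) :
    nuD θ (k + 2) s = nuD θ (k + 1) s * fellerZero θ (k + 2) := by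
  rw [nuD_succ, if_neg (notMem_of_mem_derSet hs (by omega))]

lemma muD_succ_of_mem_derSet (hs : s ∈ derSet (k + 1)) :
    muD p q (k + 2) s = muD p q (k + 1) s * p (k + 1) := by
  rw [muD_succ, if_neg (notMem_of_mem_derSet hs (by omega)), if_neg (mem_derSet.1 hs).2.2.1]

lemma succ_succ_notMem_insert_of_mem_derSet (hs : s ∈ derSet k) : k + 2 ∉ insert (k + 1) s := by
  rw [mem_insert, not_or]
  exact ⟨by omega, notMem_of_mem_derSet hs (by omega)⟩

lemma nuD_insert_of_mem_derSet (hs : s ∈ derSet k) :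
    nuD θ (k + 2) (insert (k + 1) s) =
      nuD θ k s * fellerOne θ (k + 1) * fellerZero θ (k + 2) := by
  rw [nuD_succ, nuD_succ, if_pos (mem_insert_self _ _),
    if_neg (succ_succ_notMem_insert_of_mem_derSet hs)]
  congr 2
  refine nuD_congr θ fun i hi => ?_
  rw [mem_insert, or_iff_right (by omega)]

lemma muD_insert_of_mem_derSet (hs : s ∈ derSet k) :
    muD p q (k + 2) (insert (k + 1) s) = muD p q k s * q (k + 1) := by
  obtain ⟨j, rfl⟩ : ∃ j, k = j + 1 :=
    ⟨k - 1, by have := mem_Icc_of_mem_derSet hs (mem_derSet.1 hs).2.1; omega⟩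
  rw [muD_succ, muD_succ, if_pos (mem_insert_self _ _), if_pos (mem_insert_self _ _),
    if_neg (succ_succ_notMem_insert_of_mem_derSet hs), mul_one]
  congr 1
  refine muD_congr p q fun i hi => ?_
  rw [mem_insert, or_iff_right (by omega)]

lemma muD_pair_mul {i : ℕ} (hi : 3 ≤ i) (hin : i < n) :
    muD p q n {1, i} * (p (i - 1) * p i) = muD p q n {1} * q i := by
  have hT : ({i - 1, i} : Finset ℕ) ⊆ Icc 1 (n - 1) := by
    intro j hj
    simp only [mem_insert, mem_singleton] at hj
    rw [mem_Icc]; omega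
  have := prod_mul_prod_eq_of_eqOn_sdiff hT
    (f := fun j => if j + 1 ∈ ({1, i} : Finset ℕ) then 1 else if j ∈ ({1, i} : Finset ℕ) then q j
      else p j)
    (g := fun j => if j + 1 ∈ ({1} : Finset ℕ) then 1 else if j ∈ ({1} : Finset ℕ) then q j
      else p j) ?_
  · rw [prod_pair (by omega), prod_pair (by omega)] at this
    simpa [muD, show i - 1 + 1 = i by omega, show i - 1 ≠ 1 by omega, show i ≠ 1 by omega,
      show i ≠ 0 by omega] using this
  · intro j hj
    simp only [Finset.mem_sdiff, mem_insert, mem_singleton, mem_Icc] at hj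
    simp only [mem_insert, mem_singleton]
    split_ifs <;> first | rfl | omega

lemma nuD_pair_mul {i : ℕ} (hi : 2 ≤ i) (hin : i ≤ n) :
    nuD θ n {1, i} * fellerZero θ i = nuD θ n {1} * fellerOne θ i := by
  have hT : ({i} : Finset ℕ) ⊆ Icc 1 n := by simp; omega
  have := prod_mul_prod_eq_of_eqOn_sdiff hT
    (f := fun j => if j ∈ ({1, i} : Finset ℕ) then fellerOne θ j else fellerZero θ j)
    (g := fun j => if j ∈ ({1} : Finset ℕ) then fellerOne θ j else fellerZero θ j) ?_
  · simpa [nuD, fellerOne, fellerZero, show i ≠ 1 by omega] using this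
  · intro j hj
    simp only [Finset.mem_sdiff, mem_singleton] at hj
    simp only [mem_insert, mem_singleton, hj.2, or_false]

end Products

section Feller

variable {θ : ℕ → ℝ}

lemma gamD_eq_zero {n : ℕ} (hn : n ≤ 1) : gamD θ n = 0 := by
  rw [gamD, derSet_eq_empty hn, sum_empty]

lemma gamD_succ_succ {k : ℕ} (hk : 1 ≤ k) :
    gamD θ (k + 2) =
      fellerZero θ (k + 2) * (gamD θ (k + 1) + fellerOne θ (k + 1) * gamD θ k) := by
  have hinj : Set.InjOn (insert (k + 1)) (derSet k : Set (Finset ℕ)) := fun a ha b hb hab => by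
    rw [← erase_insert (notMem_of_mem_derSet ha (lt_add_one k)),
      ← erase_insert (notMem_of_mem_derSet hb (lt_add_one k)), hab]
  rw [gamD, ← sum_filter_not_add_sum_filter _ (k + 1 ∈ ·), derSet_filter_notMem,
    derSet_filter_mem hk, sum_image hinj, sum_congr rfl fun s hs => nuD_succ_of_mem_derSet θ hs,
    sum_congr rfl fun s hs => nuD_insert_of_mem_derSet θ hs, ← sum_mul, ← sum_mul, ← sum_mul,
    gamD, gamD]
  ring

variable (hθ : ∀ i, 1 ≤ i → 0 < θ i)
include hθ

lemma nuD_pos {n : ℕ} {s : Finset ℕ} (hs : s ∈ derSet n) : 0 < nuD θ n s := by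
  refine prod_pos fun i hi => ?_
  have hi1 : 1 ≤ i := (mem_Icc.1 hi).1
  have hden : 0 < (i : ℝ) - 1 + θ i := by
    have : (1 : ℝ) ≤ i := by exact_mod_cast hi1
    linarith [hθ i hi1]
  split_ifs with h
  · exact div_pos (hθ i hi1) hden
  · have : i ≠ 1 := by rintro rfl; exact h (mem_derSet.1 hs).2.1
    have : (2 : ℝ) ≤ i := by exact_mod_cast (by omega : 2 ≤ i)
    exact div_pos (by linarith) hden

lemma gamD_nonneg (n : ℕ) : 0 ≤ gamD θ n :=
  sum_nonneg fun _ hs => (nuD_pos hθ hs).le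

lemma gamD_pos {n : ℕ} {s : Finset ℕ} (hs : s ∈ derSet n) : 0 < gamD θ n :=
  (nuD_pos hθ hs).trans_le (single_le_sum (fun _ ht => (nuD_pos hθ ht).le) hs)

lemma fellerStay_pos {i : ℕ} (hi : 2 ≤ i) : 0 < fellerStay θ i := by
  have hx : (1 : ℝ) ≤ i := by exact_mod_cast (by omega : 1 ≤ i)
  have hA : 0 < ((i : ℝ) - 1 + θ i) * gamD θ i :=
    mul_pos (by linarith [hθ i (by omega)]) (gamD_pos hθ (singleton_one_mem_derSet hi))
  exact div_pos hA
    (add_pos_of_pos_of_nonneg hA (mul_nonneg (hθ i (by omega)).le (gamD_nonneg hθ _)))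

lemma fellerStay_two : fellerStay θ 2 = 1 := by
  have hA : 0 < ((2 : ℕ) - 1 + θ 2) * gamD θ 2 :=
    mul_pos (by norm_num; linarith [hθ 2 (by norm_num)])
      (gamD_pos hθ (singleton_one_mem_derSet le_rfl))
  rw [fellerStay, show 2 - 1 = 1 from rfl, gamD_eq_zero le_rfl, mul_zero, add_zero,
    div_self hA.ne']

lemma fellerStay_mul_gamD {i : ℕ} (hi : 2 ≤ i) :
    fellerStay θ i * gamD θ (i + 1) = fellerZero θ (i + 1) * gamD θ i := by
  obtain ⟨k, rfl⟩ : ∃ k, i = k + 1 := ⟨i - 1, by omega⟩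
  have hθk := hθ (k + 1) (by omega)
  have hγ := gamD_pos hθ (singleton_one_mem_derSet hi)
  have hγ' := gamD_nonneg hθ (θ := θ) k
  rw [show k + 1 + 1 = k + 2 from rfl, gamD_succ_succ (by omega), fellerStay, fellerOne,
    Nat.add_sub_cancel]
  push_cast
  rw [add_sub_cancel_right]
  have : 0 < (k + θ (k + 1)) * gamD θ (k + 1) + θ (k + 1) * gamD θ k := by positivity
  field_simp

lemma theta_eq_fellerStay {i : ℕ} (hi : 3 ≤ i) :
    θ i = ((i : ℝ) - 1) * (1 - fellerStay θ i) / (fellerStay θ i * fellerStay θ (i - 1)) := by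
  have h := fellerStay_mul_gamD hθ (i := i - 1) (by omega)
  rw [Nat.sub_add_cancel (by omega), fellerZero] at h
  have hx : 0 < (i : ℝ) - 1 := by
    have : (3 : ℝ) ≤ i := by exact_mod_cast hi
    linarith
  have hθi := hθ i (by omega)
  have hγ := gamD_pos hθ (singleton_one_mem_derSet (n := i) (by omega))
  have hγ' := gamD_pos hθ (singleton_one_mem_derSet (n := i - 1) (by omega))
  have hprev : fellerStay θ (i - 1) =
      ((i : ℝ) - 1) * gamD θ (i - 1) / (((i : ℝ) - 1 + θ i) * gamD θ i) := by
    rw [eq_div_iff (by positivity), mul_left_comm, h]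
    field_simp
  rw [hprev, fellerStay]
  field_simp
  ring

end Feller

lemma eq_of_mul_one_sub_div_eq {x c a b : ℝ} (hx : x ≠ 0) (hc : c ≠ 0) (ha : a ≠ 0) (hb : b ≠ 0)
    (h : x * (1 - a) / (a * c) = x * (1 - b) / (b * c)) : a = b := by
  field_simp at h
  linear_combination -h

section Equivalences

variable {p q θ : ℕ → ℝ} {n : ℕ}

lemma eq_fellerStay_of_two_le (hp2 : p 2 = 1) (hθ : ∀ i, 1 ≤ i → 0 < θ i)
    (H : ∀ i, 3 ≤ i → i ≤ n - 1 → p i = fellerStay θ i) :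
    ∀ i, 2 ≤ i → i ≤ n - 1 → p i = fellerStay θ i := by
  intro i hi hin
  rcases hi.eq_or_lt with rfl | hi
  · rw [hp2, fellerStay_two hθ]
  · exact H i hi hin

theorem eq_fellerStay_iff_theta_eq (hp2 : p 2 = 1) (hp : ∀ i, 3 ≤ i → 0 < p i)
    (hq : ∀ i, q i = 1 - p i) (hθ : ∀ i, 1 ≤ i → 0 < θ i) :
    (∀ i, 3 ≤ i → i ≤ n - 1 → p i = fellerStay θ i) ↔
      ∀ i, 3 ≤ i → i ≤ n - 1 → θ i = ((i : ℝ) - 1) * q i / (p i * p (i - 1)) := by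
  constructor
  · intro H i hi hin
    have H2 := eq_fellerStay_of_two_le hp2 hθ H
    rw [hq, H2 i (by omega) hin, H2 (i - 1) (by omega) (by omega)]
    exact theta_eq_fellerStay hθ hi
  · intro H
    suffices ∀ i, 2 ≤ i → i ≤ n - 1 → p i = fellerStay θ i from fun i hi => this i (by omega)
    intro i hi
    induction i, hi using Nat.le_induction with
    | base => exact fun _ => hp2.trans (fellerStay_two hθ).symm
    | succ i hi ih =>
      intro hin
      have hx : (0 : ℝ) < ((i + 1 : ℕ) : ℝ) - 1 := by
        have : (2 : ℝ) ≤ i := by exact_mod_cast hi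
        push_cast; linarith
      have hchain := H (i + 1) (by omega) hin
      rw [hq, Nat.add_sub_cancel, ih (by omega)] at hchain
      have hfeller := theta_eq_fellerStay hθ (i := i + 1) (by omega)
      rw [Nat.add_sub_cancel] at hfeller
      exact eq_of_mul_one_sub_div_eq hx.ne' (fellerStay_pos hθ hi).ne' (hp _ (by omega)).ne'
        (fellerStay_pos hθ (by omega)).ne' (hchain.symm.trans hfeller)

theorem theta_eq_of_muD_eq (hp2 : p 2 = 1) (hp : ∀ i, 3 ≤ i → 0 < p i)
    (hθ : ∀ i, 1 ≤ i → 0 < θ i) (H : ∀ s ∈ derSet n, muD p q n s = nuD θ n s / gamD θ n) :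
    ∀ i, 3 ≤ i → i ≤ n - 1 → θ i = ((i : ℝ) - 1) * q i / (p i * p (i - 1)) := by
  intro i hi hin
  have hs0 := singleton_one_mem_derSet (n := n) (by omega)
  have hμ0 : 0 < muD p q n {1} := by
    rw [H _ hs0]; exact div_pos (nuD_pos hθ hs0) (gamD_pos hθ hs0)
  have hν : muD p q n {1, i} * fellerZero θ i = muD p q n {1} * fellerOne θ i := by
    rw [H _ hs0, H _ (pair_mem_derSet hi (by omega)), div_mul_eq_mul_div,
      nuD_pair_mul θ (by omega) (by omega), mul_div_right_comm]
  have hμ := muD_pair_mul p q (n := n) hi (by omega)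
  have hp_prev : p (i - 1) ≠ 0 := by
    rcases hi.eq_or_lt with rfl | hi
    · rw [show 3 - 1 = 2 from rfl, hp2]; exact one_ne_zero
    · exact (hp _ (by omega)).ne'
  have hden : (0 : ℝ) < (i : ℝ) - 1 + θ i := by
    have : (3 : ℝ) ≤ i := by exact_mod_cast hi
    linarith [hθ i (by omega)]
  rw [fellerZero, fellerOne] at hν
  field_simp at hν
  rw [eq_div_iff (mul_ne_zero (hp i hi).ne' hp_prev)]
  exact mul_left_cancel₀ hμ0.ne'
    (by linear_combination (-(p i * p (i - 1))) * hν + ((i : ℝ) - 1) * hμ)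

theorem nuD_eq_gamD_mul_muD (hq1 : q 1 = 1)
    (hstay : ∀ k, 1 ≤ k → k + 2 ≤ n →
      gamD θ (k + 2) * p (k + 1) = fellerZero θ (k + 2) * gamD θ (k + 1))
    (hmove : ∀ k, 1 ≤ k → k + 2 ≤ n →
      gamD θ (k + 2) * q (k + 1) = fellerZero θ (k + 2) * fellerOne θ (k + 1) * gamD θ k) :
    ∀ m ≤ n, ∀ s ∈ derSet m, nuD θ m s = gamD θ m * muD p q m s := by
  intro m
  induction m using Nat.twoStepInduction with
  | zero => simp [derSet_eq_empty]
  | one => simp [derSet_eq_empty]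
  | more k ih ih' =>
    intro hm s hs
    rcases Nat.eq_zero_or_pos k with rfl | hk
    · rw [derSet_two, mem_singleton] at hs
      subst hs
      simp [gamD, derSet_two, muD, hq1]
    · by_cases hks : k + 1 ∈ s
      · have hs' : s ∈ (derSet (k + 2)).filter (k + 1 ∈ ·) := mem_filter.2 ⟨hs, hks⟩
        rw [derSet_filter_mem hk, mem_image] at hs'
        obtain ⟨t, ht, rfl⟩ := hs'
        rw [nuD_insert_of_mem_derSet θ ht, muD_insert_of_mem_derSet p q ht, ih (by omega) t ht]
        linear_combination (-muD p q k t) * hmove k hk hm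
      · have hs' : s ∈ derSet (k + 1) := by
          rw [← derSet_filter_notMem]; exact mem_filter.2 ⟨hs, hks⟩
        rw [nuD_succ_of_mem_derSet θ hs', muD_succ_of_mem_derSet p q hs', ih' (by omega) s hs']
        linear_combination (-muD p q (k + 1) s) * hstay k hk hm

theorem muD_eq_of_eq_fellerStay (hp1 : p 1 = 0) (hp2 : p 2 = 1) (hq : ∀ i, q i = 1 - p i)
    (hθ : ∀ i, 1 ≤ i → 0 < θ i) (H : ∀ i, 3 ≤ i → i ≤ n - 1 → p i = fellerStay θ i) :
    ∀ s ∈ derSet n, muD p q n s = nuD θ n s / gamD θ n := by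
  have H2 := eq_fellerStay_of_two_le hp2 hθ H
  have hstay : ∀ k, 1 ≤ k → k + 2 ≤ n →
      gamD θ (k + 2) * p (k + 1) = fellerZero θ (k + 2) * gamD θ (k + 1) := fun k _ hkn => by
    rw [H2 (k + 1) (by omega) (by omega), mul_comm]
    exact fellerStay_mul_gamD hθ (by omega)
  have hmove : ∀ k, 1 ≤ k → k + 2 ≤ n →
      gamD θ (k + 2) * q (k + 1) = fellerZero θ (k + 2) * fellerOne θ (k + 1) * gamD θ k :=
    fun k hk hkn => by
      rw [hq, mul_one_sub, hstay k hk hkn, gamD_succ_succ hk]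
      ring
  intro s hs
  rw [nuD_eq_gamD_mul_muD (by rw [hq, hp1, sub_zero]) hstay hmove n le_rfl s hs,
    mul_div_cancel_left₀ _ (gamD_pos hθ hs).ne']

end Equivalences

theorem stmt9_general (n : ℕ) (p q : ℕ → ℝ)
    (hp1 : p 1 = 0) (hp2 : p 2 = 1) (hp : ∀ i, 3 ≤ i → 0 < p i ∧ p i < 1)
    (hq : ∀ i, q i = 1 - p i)
    (θ : ℕ → ℝ) (hθpos : ∀ i, 1 ≤ i → 0 < θ i) :
    ((∀ s ∈ derSet n, muD p q n s = nuD θ n s / gamD θ n) ↔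
      (∀ i : ℕ, 3 ≤ i → i ≤ n - 1 →
        p i = ((i : ℝ) - 1 + θ i) * gamD θ i
          / (((i : ℝ) - 1 + θ i) * gamD θ i + θ i * gamD θ (i - 1)))) ∧
    ((∀ i : ℕ, 3 ≤ i → i ≤ n - 1 →
        p i = ((i : ℝ) - 1 + θ i) * gamD θ i
          / (((i : ℝ) - 1 + θ i) * gamD θ i + θ i * gamD θ (i - 1))) ↔
      (∀ i : ℕ, 3 ≤ i → i ≤ n - 1 →
        θ i = ((i : ℝ) - 1) * q i / (p i * p (i - 1)))) := by
  have hp' : ∀ i, 3 ≤ i → 0 < p i := fun i hi => (hp i hi).1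
  have hii_iff_iii := eq_fellerStay_iff_theta_eq (n := n) hp2 hp' hq hθpos
  exact ⟨⟨fun h => hii_iff_iii.2 (theta_eq_of_muD_eq hp2 hp' hθpos h),
    muD_eq_of_eq_fellerStay hp1 hp2 hq hθpos⟩, hii_iff_iii⟩

/-- equivalence between the conditional relation
`L(X^{n,p}) = L(Y_n,…,Y_1 | Δ_n)` and explicit relations between `p` and `θ`. -/
theorem stmt9 (n : ℕ) (hn : 4 ≤ n) (p q : ℕ → ℝ)
    (hp1 : p 1 = 0) (hp2 : p 2 = 1) (hp : ∀ i, 3 ≤ i → 0 < p i ∧ p i < 1)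
    (hq : ∀ i, q i = 1 - p i)
    (θ : ℕ → ℝ) (hθ1 : θ 1 = 1) (hθpos : ∀ i, 1 ≤ i → 0 < θ i) :
    ((∀ s ∈ derSet n, muD p q n s = nuD θ n s / gamD θ n) ↔
      (∀ i : ℕ, 3 ≤ i → i ≤ n - 1 →
        p i = ((i : ℝ) - 1 + θ i) * gamD θ i
          / (((i : ℝ) - 1 + θ i) * gamD θ i + θ i * gamD θ (i - 1)))) ∧
    ((∀ i : ℕ, 3 ≤ i → i ≤ n - 1 →
        p i = ((i : ℝ) - 1 + θ i) * gamD θ i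
          / (((i : ℝ) - 1 + θ i) * gamD θ i + θ i * gamD θ (i - 1))) ↔
      (∀ i : ℕ, 3 ≤ i → i ≤ n - 1 →
        θ i = ((i : ℝ) - 1) * q i / (p i * p (i - 1)))) :=
  stmt9_general n p q hp1 hp2 hp hq θ hθpos
end

section
/- Let n ≥ 1 and θ : ℕ → ℝ with θ_1 = 1 and θ_i > 0 for all i. For r : {1,…,n} → {0,1} with r(1) = 1, list the elements of {i : r(i) = 1} ∪ {n+1} in decreasing order n+1 = s_0 > s_1 > ⋯ > s_K = 1, and define the cycle type C(r) = (C_1(r), …, C_n(r)) by C_j(r) := #{t ∈ {1,…,K} : s_{t−1} − s_t = j}. Fix c = (c_1,…,c_n) ∈ ℤ_{≥0}^n with Σ_{j=1}^n j·c_j = n, let ‖c‖ := Σ_j c_j, and let c̄ ∈ ℕ^{‖c‖} be the nondecreasing list containing each j with multiplicity c_j. Then Σ_{r : r(1)=1, C(r)=c} Π_{i=1}^{n} b_i(r(i)) = ((n−1)!/θ_{<n>})·θ_1·( Π_{i=1}^{n} 1/c_i! )·Σ_{σ ∈ Sym(‖c‖)} Π_{i=1}^{‖c‖−1} θ_{ε(i,c,σ)}/(ε(i,c,σ)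 − 1), where b_i(1) = θ_i/(i−1+θ_i), b_i(0) = (i−1)/(i−1+θ_i), θ_{<n>} := Π_{k=1}^{n}(θ_k + k − 1), and ε(i,c,σ) := n + 1 − Σ_{j=1}^{i} c̄(σ(j)). -/
open Finset Filter

/-- The number of `j`-spacings (`j`-cycles) of a binary string of length `n`, encoded by
the set `s ⊆ {1,…,n}` of its `1`-positions: the number of `i ∈ s` whose successor in
`s ∪ {n+1}` is `i + j`. -/
def cycCount (n : ℕ) (s : Finset ℕ) (j : ℕ) : ℕ :=
  ((Finset.Icc 1 n).filter (fun i =>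
    i ∈ s ∧ (i + j ∈ s ∨ i + j = n + 1) ∧ ∀ m ∈ Finset.Ioo i (i + j), m ∉ s)).card

/-!
A string with `Y_1 = 1` is determined by the set `s ∋ 1` of its `1`s, hence, listing
`s ∪ {n + 1}` as `n + 1 = s_0 > s_1 > ⋯ > s_K = 1`, by the composition
`(s_0 - s_1, …, s_{K-1} - s_K)` of `n`, whose parts are the cycle lengths. The probability
of `s` is `∏_{i ∈ s} θ_i ∏_{i ∉ s} (i - 1) / θ_{<n>}`, i.e.
`(n - 1)!/θ_{<n>} · θ_1 · ∏_{i ∈ s, i ≠ 1} θ_i/(i - 1)`, and `ε(i, c, σ)` is precisely `s_i`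
for the composition `c̄ ∘ σ`. A composition with multiplicities `c` equals `c̄ ∘ σ` for exactly
`∏ c_j!` permutations `σ`, so the sum over `σ` counts every admissible `s` that many times.
-/
namespace FellerCoupling

open scoped Nat

variable {K n : ℕ}

def partialSum (f : Fin K → ℕ) (i : ℕ) : ℕ :=
  ∑ t ∈ univ.filter (fun t : Fin K => (t : ℕ) < i), f t

@[simp] lemma partialSum_zero (f : Fin K → ℕ) : partialSum f 0 = 0 := by
  simp [partialSum]

lemma partialSum_succ (f : Fin K → ℕ) {i : ℕ} (hi : i < K) :
    partialSum f (i + 1) = partialSum f i + f ⟨i, hi⟩ := by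
  have : univ.filter (fun t : Fin K => (t : ℕ) < i + 1)
      = cons ⟨i, hi⟩ (univ.filter fun t : Fin K => (t : ℕ) < i) (by simp) := by
    ext t
    simp [Fin.ext_iff, le_iff_eq_or_lt]
  rw [partialSum, this, sum_cons, add_comm, partialSum]

lemma partialSum_le_sum (f : Fin K → ℕ) (i : ℕ) : partialSum f i ≤ ∑ t, f t :=
  sum_le_sum_of_subset (filter_subset _ _)

lemma partialSum_of_le (f : Fin K → ℕ) {i : ℕ} (hi : K ≤ i) : partialSum f i = ∑ t, f t := by
  rw [partialSum, filter_true_of_mem fun t _ => t.isLt.trans_le hi]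

lemma partialSum_strictMonoOn {f : Fin K → ℕ} (hf : ∀ t, 0 < f t) :
    StrictMonoOn (partialSum f) (Set.Iic K) := by
  intro a _ b hb hab
  refine sum_lt_sum_of_subset (i := ⟨a, hab.trans_le hb⟩) ?_ ?_ ?_ (hf _) fun _ _ _ => Nat.zero_le _
  · exact monotone_filter_right _ fun t _ (ht : (t : ℕ) < a) => ht.trans hab
  · simpa using hab
  · simp

structure IsComposition (n : ℕ) (f : Fin K → ℕ) : Prop where
  pos : ∀ t, 0 < f t
  sum_eq : ∑ t, f t = n

/-- The paper's `s_i`: reading the parts of `f` as the spacings between successive `1`s from the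
top, `n + 1 = onePos n f 0 > onePos n f 1 > ⋯ > onePos n f K = 1`. -/
def onePos (n : ℕ) (f : Fin K → ℕ) (i : ℕ) : ℕ := n + 1 - partialSum f i

def onesOf (n : ℕ) (f : Fin K → ℕ) : Finset ℕ := univ.image fun u : Fin K => onePos n f (u + 1)

@[simp] lemma onePos_zero (f : Fin K → ℕ) : onePos n f 0 = n + 1 := by simp [onePos]

lemma mem_onesOf {f : Fin K → ℕ} {x : ℕ} :
    x ∈ onesOf n f ↔ ∃ i ∈ Icc 1 K, onePos n f i = x := by
  simp only [onesOf, mem_image, mem_univ, true_and, mem_Icc]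
  constructor
  · rintro ⟨u, rfl⟩
    exact ⟨u + 1, ⟨by omega, u.isLt⟩, rfl⟩
  · rintro ⟨i, ⟨h₁, h₂⟩, rfl⟩
    exact ⟨⟨i - 1, by omega⟩, by simp only; congr; omega⟩

lemma onePos_mem_onesOf {f : Fin K → ℕ} {i : ℕ} (h₁ : 1 ≤ i) (h₂ : i ≤ K) :
    onePos n f i ∈ onesOf n f :=
  mem_onesOf.2 ⟨i, mem_Icc.2 ⟨h₁, h₂⟩, rfl⟩

lemma exists_onePos_eq {f : Fin K → ℕ} {y : ℕ} (hy : y ∈ onesOf n f ∨ y = n + 1) :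
    ∃ k ≤ K, onePos n f k = y := by
  rcases hy with hy | rfl
  · obtain ⟨k, hk, rfl⟩ := mem_onesOf.1 hy
    exact ⟨k, (mem_Icc.1 hk).2, rfl⟩
  · exact ⟨0, Nat.zero_le K, onePos_zero f⟩

namespace IsComposition

variable {f : Fin K → ℕ} (hf : IsComposition n f)
include hf

lemma apply_mem_Icc (t : Fin K) : f t ∈ Icc 1 n :=
  mem_Icc.2 ⟨hf.pos t, hf.sum_eq ▸ single_le_sum (fun _ _ => Nat.zero_le _) (mem_univ t)⟩

lemma comp_perm (σ : Equiv.Perm (Fin K)) : IsComposition n (f ∘ σ) :=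
  ⟨fun t => hf.pos (σ t), by rw [← hf.sum_eq]; exact Equiv.sum_comp σ f⟩

lemma pos_length (hn : 0 < n) : 0 < K := by
  rcases K with _ | K
  · simp [← hf.sum_eq] at hn
  · exact K.succ_pos

lemma onePos_add_partialSum (i : ℕ) : onePos n f i + partialSum f i = n + 1 := by
  have := hf.sum_eq ▸ partialSum_le_sum f i
  rw [onePos]; omega

lemma onePos_length : onePos n f K = 1 := by
  rw [onePos, partialSum_of_le f le_rfl, hf.sum_eq]; omega

lemma onePos_succ_add {i : ℕ} (hi : i < K) : onePos n f (i + 1) + f ⟨i, hi⟩ = onePos n f i := by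
  have h₁ := hf.onePos_add_partialSum i
  have h₂ := hf.onePos_add_partialSum (i + 1)
  rw [partialSum_succ f hi] at h₂
  omega

lemma onePos_strictAntiOn : StrictAntiOn (onePos n f) (Set.Iic K) := by
  intro a ha b hb hab
  have := partialSum_strictMonoOn hf.pos ha hb hab
  have h₁ := hf.onePos_add_partialSum a
  have h₂ := hf.onePos_add_partialSum b
  omega

lemma onePos_mem_Icc {i : ℕ} (hi₀ : 1 ≤ i) (hiK : i ≤ K) : onePos n f i ∈ Icc 1 n := by
  have h₁ := hf.onePos_strictAntiOn.antitoneOn (a := i) (b := K) hiK (le_refl K) hiK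
  have h₂ := hf.onePos_strictAntiOn (a := 0) (b := i) (Nat.zero_le K) hiK (by omega)
  rw [hf.onePos_length] at h₁
  rw [onePos_zero] at h₂
  exact mem_Icc.2 ⟨h₁, by omega⟩

lemma onesOf_subset : onesOf n f ⊆ Icc 1 n := by
  intro x hx
  obtain ⟨i, hi, rfl⟩ := mem_onesOf.1 hx
  exact hf.onePos_mem_Icc (mem_Icc.1 hi).1 (mem_Icc.1 hi).2

lemma one_mem_onesOf (hK : 0 < K) : 1 ∈ onesOf n f :=
  hf.onePos_length ▸ onePos_mem_onesOf hK le_rfl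

lemma eq_pred_of_forall_notMem_Ioo {i k : ℕ} (hi₁ : 1 ≤ i) (hiK : i ≤ K) (hkK : k ≤ K)
    (hlt : onePos n f i < onePos n f k)
    (hgap : ∀ m ∈ Ioo (onePos n f i) (onePos n f k), m ∉ onesOf n f) : k = i - 1 := by
  have hp := hf.onePos_strictAntiOn
  have hki : k < i := (hp.lt_iff_gt (Set.mem_Iic.2 hiK) (Set.mem_Iic.2 hkK)).1 hlt
  by_contra hne
  refine hgap _ ?_ (onePos_mem_onesOf (i := i - 1) (by omega) (by omega))
  rw [mem_Ioo, hp.lt_iff_gt (Set.mem_Iic.2 hiK) (Set.mem_Iic.2 (by omega)),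
    hp.lt_iff_gt (Set.mem_Iic.2 (by omega)) (Set.mem_Iic.2 hkK)]
  omega

lemma cycCount_onesOf {j : ℕ} (hj : 0 < j) :
    cycCount n (onesOf n f) j = #{u | f u = j} := by
  have hp := hf.onePos_strictAntiOn
  symm
  refine card_bij (fun u _ => onePos n f (u + 1)) ?_ ?_ ?_
  · intro u hu
    have hj : onePos n f (u + 1) + j = onePos n f u :=
      (mem_filter.1 hu).2 ▸ hf.onePos_succ_add u.isLt
    refine mem_filter.2 ⟨hf.onePos_mem_Icc (by omega) u.isLt,
      onePos_mem_onesOf (by omega) u.isLt, ?_, ?_⟩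
    · rw [hj]
      rcases Nat.eq_zero_or_pos (u : ℕ) with h | h
      · exact Or.inr (h ▸ onePos_zero f)
      · exact Or.inl (onePos_mem_onesOf h u.isLt.le)
    · intro m hm hm'
      obtain ⟨k, hk, rfl⟩ := mem_onesOf.1 hm'
      have hkK : k ∈ Set.Iic K := (mem_Icc.1 hk).2
      rw [mem_Ioo, hj, hp.lt_iff_gt (Set.mem_Iic.2 u.isLt) hkK,
        hp.lt_iff_gt hkK (Set.mem_Iic.2 u.isLt.le)] at hm
      omega
  · intro a _ b _ h
    exact Fin.ext (by have := hp.injOn (Set.mem_Iic.2 a.isLt) (Set.mem_Iic.2 b.isLt) h; omega)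
  · intro x hx
    obtain ⟨-, hxS, hnext, hgap⟩ := mem_filter.1 hx
    obtain ⟨i, hi, rfl⟩ := mem_onesOf.1 hxS
    obtain ⟨k, hkK, hkx⟩ := exists_onePos_eq hnext
    obtain ⟨hi₁, hiK⟩ := mem_Icc.1 hi
    obtain rfl := hf.eq_pred_of_forall_notMem_Ioo hi₁ hiK hkK (by omega) (hkx ▸ hgap)
    have hsucc := hf.onePos_succ_add (i := i - 1) (by omega)
    rw [Nat.sub_add_cancel hi₁] at hsucc
    exact ⟨⟨i - 1, by omega⟩, mem_filter.2 ⟨mem_univ _, by omega⟩, by simp only; congr 1; omega⟩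

lemma strictAnti_onePos_succ : StrictAnti fun u : Fin K => onePos n f (u + 1) :=
  fun a b hab => hf.onePos_strictAntiOn (Set.mem_Iic.2 a.isLt) (Set.mem_Iic.2 b.isLt)
    (Nat.succ_lt_succ hab)

lemma onesOf_inj {g : Fin K → ℕ} (hg : IsComposition n g) (h : onesOf n f = onesOf n g) :
    f = g := by
  have hrange := congrArg ((↑) : Finset ℕ → Set ℕ) h
  simp only [onesOf, coe_image, coe_univ, Set.image_univ] at hrange
  have hsucc := (hf.strictAnti_onePos_succ.range_inj hg.strictAnti_onePos_succ).1 hrange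
  have hpos : ∀ i ≤ K, onePos n f i = onePos n g i
    | 0, _ => by simp
    | i + 1, hi => congrFun hsucc ⟨i, hi⟩
  funext u
  have h₁ := hf.onePos_succ_add u.isLt
  have h₂ := hg.onePos_succ_add u.isLt
  rw [hpos u u.isLt.le, hpos (u + 1) u.isLt] at h₁
  simp only [Fin.eta] at h₁ h₂
  omega

end IsComposition

lemma exists_isComposition_onePos_eq {p : ℕ → ℕ} (hp : StrictAntiOn p (Set.Iic K))
    (hp0 : p 0 = n + 1) (hpK : p K = 1) :
    ∃ f : Fin K → ℕ, IsComposition n f ∧ ∀ i ≤ K, onePos n f i = p i := by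
  set f : Fin K → ℕ := fun u => p u - p (u + 1)
  have hf_pos : ∀ u, 0 < f u := fun u => Nat.sub_pos_of_lt
    (hp (Set.mem_Iic.2 u.isLt.le) (Set.mem_Iic.2 u.isLt) (Nat.lt_succ_self _))
  have hpartial : ∀ i ≤ K, partialSum f i + p i = n + 1 := by
    intro i hi
    induction i with
    | zero => simpa using hp0
    | succ i ih =>
      have := hf_pos ⟨i, hi⟩
      rw [partialSum_succ f hi, ← ih (by omega)]
      simp only [f] at this ⊢
      omega
  refine ⟨f, ⟨hf_pos, ?_⟩, fun i hi => ?_⟩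
  · have := hpartial K le_rfl
    rw [partialSum_of_le f le_rfl, hpK] at this
    omega
  · have := hpartial i hi
    rw [onePos]
    omega

lemma exists_onesOf_eq {s : Finset ℕ} (hs : s ⊆ Icc 1 n) (h1 : 1 ∈ s) (hK : #s = K) :
    ∃ f : Fin K → ℕ, IsComposition n f ∧ onesOf n f = s := by
  set e := s.orderEmbOfFin hK
  -- `g` lists `s ∪ {n + 1}` increasingly.
  let g : ℕ → ℕ := fun m => if h : m < K then e ⟨m, h⟩ else n + 1
  have hg_lt : ∀ m (h : m < K), g m = e ⟨m, h⟩ := fun m h => dif_pos h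
  have hK0 : 0 < K := hK ▸ card_pos.2 ⟨1, h1⟩
  have hgK : g K = n + 1 := dif_neg (lt_irrefl K)
  have hg0 : g 0 = 1 := by
    rw [hg_lt 0 hK0, orderEmbOfFin_zero hK hK0]
    exact le_antisymm (min'_le s 1 h1) (mem_Icc.1 (hs (min'_mem s _))).1
  have hg : StrictMonoOn g (Set.Iic K) := by
    intro a ha b hb hab
    rw [hg_lt a (hab.trans_le hb)]
    rcases (Set.mem_Iic.1 hb).lt_or_eq with hb' | rfl
    · rw [hg_lt b hb']
      exact e.strictMono (Fin.mk_lt_mk.2 hab)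
    · rw [hgK]
      exact Nat.lt_succ_of_le (mem_Icc.1 (hs (s.orderEmbOfFin_mem hK _))).2
  obtain ⟨f, hf, hfg⟩ := exists_isComposition_onePos_eq (K := K) (n := n) (p := fun i => g (K - i))
    (fun a _ b hb hab => hg (Set.mem_Iic.2 (Nat.sub_le K b)) (Set.mem_Iic.2 (Nat.sub_le K a))
      (by rw [Set.mem_Iic] at hb; omega))
    (by simpa using hgK) (by simpa using hg0)
  refine ⟨f, hf, ?_⟩
  ext x
  rw [mem_onesOf]
  constructor
  · rintro ⟨i, hi, rfl⟩
    obtain ⟨hi₁, hiK⟩ := mem_Icc.1 hi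
    rw [hfg i hiK, hg_lt _ (by omega)]
    exact s.orderEmbOfFin_mem hK _
  · intro hx
    obtain ⟨m, rfl⟩ : x ∈ Set.range e := by rwa [range_orderEmbOfFin]
    refine ⟨K - m, mem_Icc.2 ⟨by omega, by omega⟩, ?_⟩
    rw [hfg _ (by omega), hg_lt _ (by omega)]
    congr
    omega

lemma IsComposition.prod_erase_one_onesOf {f : Fin K → ℕ} (hf : IsComposition n f) {M : Type*}
    [CommMonoid M] (w : ℕ → M) :
    ∏ x ∈ (onesOf n f).erase 1, w x = ∏ i ∈ Icc 1 (K - 1), w (onePos n f i) := by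
  have hp := hf.onePos_strictAntiOn
  have herase : (onesOf n f).erase 1 = (Icc 1 (K - 1)).image (onePos n f) := by
    ext x
    simp only [mem_erase, mem_onesOf, mem_image, mem_Icc]
    constructor
    · rintro ⟨hx, i, ⟨hi₁, hiK⟩, rfl⟩
      refine ⟨i, ⟨hi₁, ?_⟩, rfl⟩
      by_contra! hi
      exact hx (by rw [show i = K by omega, hf.onePos_length])
    · rintro ⟨i, ⟨hi₁, hiK⟩, rfl⟩
      refine ⟨?_, i, ⟨hi₁, by omega⟩, rfl⟩
      rw [← hf.onePos_length]
      exact (hp (Set.mem_Iic.2 (by omega)) (Set.mem_Iic.2 le_rfl) (by omega)).ne'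
  rw [herase, prod_image fun a ha b hb => hp.injOn (Set.mem_Iic.2 (by simp at ha; omega))
    (Set.mem_Iic.2 (by simp at hb; omega))]

lemma sum_cycCount_eq_card {s : Finset ℕ} (hs : s ⊆ Icc 1 n) (h1 : 1 ∈ s) :
    ∑ j ∈ Icc 1 n, cycCount n s j = #s := by
  obtain ⟨f, hf, hfs⟩ := exists_onesOf_eq hs h1 rfl
  calc ∑ j ∈ Icc 1 n, cycCount n s j = ∑ j ∈ Icc 1 n, #{u | f u = j} :=
        sum_congr rfl fun j hj => by rw [← hf.cycCount_onesOf (mem_Icc.1 hj).1, hfs]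
    _ = #s := by rw [← card_eq_sum_card_fiberwise fun u _ => hf.apply_mem_Icc u, card_univ,
        Fintype.card_fin]

lemma card_perm_comp_eq_prod_factorial {ι α : Type*} [Fintype ι] [DecidableEq ι] [DecidableEq α]
    {f g : ι → α}
    (h : ∀ a, #{i | g i = a} = #{i | f i = a}) {T : Finset α} (hT : ∀ i, f i ∈ T) :
    #{σ : Equiv.Perm ι | g ∘ σ = f} = ∏ a ∈ T, (#{i | f i = a})! := by
  let e : ∀ a, {i // f i = a} ≃ {i // g i = a} := fun a =>
    Fintype.equivOfCardEq (by simp only [Fintype.card_subtype, h])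
  let σ₀ : Equiv.Perm ι := (Equiv.sigmaFiberEquiv f).symm.trans
    ((Equiv.sigmaCongrRight e).trans (Equiv.sigmaFiberEquiv g))
  have hσ₀ : g ∘ σ₀ = f := funext fun i => (e (f i) ⟨i, rfl⟩).prop
  have hg : g = f ∘ ⇑σ₀⁻¹ := by rw [← hσ₀]; ext; simp
  calc #{σ : Equiv.Perm ι | g ∘ σ = f}
      = #{τ : Equiv.Perm ι | f ∘ τ = f} :=
        card_equiv (Equiv.mulLeft σ₀⁻¹) fun σ => by simp [hg, Function.comp_assoc]
    _ = ∏ a ∈ univ.image f, (#{i | f i = a})! := by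
        rw [← Fintype.card_subtype, DomMulAct.stabilizer_card']
        simp only [Fintype.card_subtype]
    _ = ∏ a ∈ T, (#{i | f i = a})! := by
        refine prod_subset (fun a ha => ?_) fun a _ ha => ?_
        · obtain ⟨i, -, rfl⟩ := mem_image.1 ha
          exact hT i
        · rw [filter_false_of_mem fun i _ (hi : f i = a) =>
            ha (hi ▸ mem_image_of_mem f (mem_univ i))]
          rfl

/-- The probability that the `1`s of the Feller coupling `(Y_n, …, Y_1)` sit exactly at `s`. -/
noncomputable def fellerProb (n : ℕ) (θ : ℕ → ℝ) (s : Finset ℕ) : ℝ :=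
  ∏ i ∈ Icc 1 n,
    (if i ∈ s then θ i / ((i : ℝ) - 1 + θ i) else ((i : ℝ) - 1) / ((i : ℝ) - 1 + θ i))

lemma prod_Icc_two_cast_sub_one (n : ℕ) : ∏ i ∈ Icc 2 n, ((i : ℝ) - 1) = (n - 1)! := by
  induction n with
  | zero => simp
  | succ n ih =>
    rcases n with _ | n
    · simp
    · rw [prod_Icc_succ_top (by omega), ih]
      simp only [Nat.add_sub_cancel, Nat.factorial_succ]
      push_cast
      ring

lemma fellerProb_eq {θ : ℕ → ℝ} {s : Finset ℕ} (hs : s ⊆ Icc 1 n) (h1 : 1 ∈ s) :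
    fellerProb n θ s = (n - 1)! / (∏ k ∈ Icc 1 n, (θ k + (k : ℝ) - 1)) * θ 1
      * ∏ i ∈ s.erase 1, θ i / ((i : ℝ) - 1) := by
  have hn : 1 ≤ n := (mem_Icc.1 (hs h1)).2
  have hfactor : ∀ i ∈ Icc 2 n, (if i ∈ s then θ i else (i : ℝ) - 1)
      = ((i : ℝ) - 1) * if i ∈ s then θ i / ((i : ℝ) - 1) else 1 := fun i hi => by
    have : (2 : ℝ) ≤ i := by exact_mod_cast (mem_Icc.1 hi).1
    split_ifs <;> field_simp [show (i : ℝ) - 1 ≠ 0 by linarith]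
  have herase : Icc 2 n ∩ s = s.erase 1 := by
    ext i
    have := @hs i
    simp only [mem_inter, mem_erase, mem_Icc] at this ⊢
    constructor
    · rintro ⟨⟨h₂, -⟩, hi⟩; exact ⟨by omega, hi⟩
    · rintro ⟨h₁, hi⟩; exact ⟨⟨by have := (this hi).1; omega, (this hi).2⟩, hi⟩
  have hnum : ∏ i ∈ Icc 1 n, (if i ∈ s then θ i else (i : ℝ) - 1)
      = (n - 1)! * θ 1 * ∏ i ∈ s.erase 1, θ i / ((i : ℝ) - 1) := by
    have hIcc : Icc 1 n = insert 1 (Icc 2 n) := (insert_Icc_add_one_left_eq_Icc hn).symm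
    rw [hIcc, prod_insert (by simp), if_pos h1,
      prod_congr rfl hfactor, prod_mul_distrib, prod_ite_mem, herase, prod_Icc_two_cast_sub_one]
    ring
  rw [fellerProb, prod_congr rfl fun i _ => (ite_div ..).symm, prod_div_distrib, hnum,
    prod_congr rfl fun (k : ℕ) _ => (by ring : (k : ℝ) - 1 + θ k = θ k + k - 1)]
  ring

def setsWithCycleType (n : ℕ) (c : ℕ → ℕ) : Finset (Finset ℕ) :=
  {s ∈ (Icc 1 n).powerset | 1 ∈ s ∧ ∀ j ∈ Icc (1 : ℕ) n, cycCount n s j = c j}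

lemma mem_setsWithCycleType {c : ℕ → ℕ} {s : Finset ℕ} :
    s ∈ setsWithCycleType n c ↔ s ⊆ Icc 1 n ∧ 1 ∈ s ∧ ∀ j ∈ Icc 1 n, cycCount n s j = c j := by
  rw [setsWithCycleType, mem_filter, mem_powerset]

section CycleType

variable {c : ℕ → ℕ} {cbar : Fin K → ℕ} (hcbar : IsComposition n cbar)
  (hmult : ∀ j : ℕ, 1 ≤ j → j ≤ n → #{t | cbar t = j} = c j)
include hcbar hmult

lemma onesOf_comp_mem_setsWithCycleType (hn : 0 < n) (σ : Equiv.Perm (Fin K)) :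
    onesOf n (cbar ∘ σ) ∈ setsWithCycleType n c := by
  have hf := hcbar.comp_perm σ
  refine mem_setsWithCycleType.2 ⟨hf.onesOf_subset, hf.one_mem_onesOf (hf.pos_length hn),
    fun j hj => ?_⟩
  obtain ⟨hj₁, hjn⟩ := mem_Icc.1 hj
  rw [hf.cycCount_onesOf hj₁, ← hmult j hj₁ hjn]
  exact card_equiv σ fun u => by simp

lemma card_filter_onesOf_comp_eq (hK : K = ∑ j ∈ Icc 1 n, c j) {s : Finset ℕ}
    (hs : s ∈ setsWithCycleType n c) :
    #{σ : Equiv.Perm (Fin K) | onesOf n (cbar ∘ σ) = s} = ∏ j ∈ Icc 1 n, (c j)! := by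
  obtain ⟨hsub, h1, hcyc⟩ := mem_setsWithCycleType.1 hs
  obtain ⟨f, hf, rfl⟩ := exists_onesOf_eq hsub h1
    (K := K) (by rw [← sum_cycCount_eq_card hsub h1, sum_congr rfl hcyc, hK])
  have hfib : ∀ j ∈ Icc 1 n, #{u | f u = j} = c j := fun j hj => by
    rw [← hf.cycCount_onesOf (mem_Icc.1 hj).1, hcyc j hj]
  rw [filter_congr fun σ _ => ⟨(hcbar.comp_perm σ).onesOf_inj hf, congrArg (onesOf n)⟩,
    card_perm_comp_eq_prod_factorial (fun j => ?_) hf.apply_mem_Icc]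
  · exact prod_congr rfl fun j hj => by rw [hfib j hj]
  by_cases hj : j ∈ Icc 1 n
  · rw [hfib j hj, hmult j (mem_Icc.1 hj).1 (mem_Icc.1 hj).2]
  · rw [filter_false_of_mem fun u _ (hu : cbar u = j) => hj (hu ▸ hcbar.apply_mem_Icc u),
      filter_false_of_mem fun u _ (hu : f u = j) => hj (hu ▸ hf.apply_mem_Icc u)]

theorem sum_perm_onesOf_comp (hK : K = ∑ j ∈ Icc 1 n, c j) (hn : 0 < n) {M : Type*}
    [AddCommMonoid M] (F : Finset ℕ → M) :
    ∑ σ : Equiv.Perm (Fin K), F (onesOf n (cbar ∘ σ))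
      = (∏ j ∈ Icc 1 n, (c j)!) • ∑ s ∈ setsWithCycleType n c, F s := by
  rw [← sum_fiberwise_of_maps_to fun σ _ => onesOf_comp_mem_setsWithCycleType hcbar hmult hn σ,
    smul_sum]
  refine sum_congr rfl fun s hs => ?_
  rw [sum_congr rfl fun σ hσ => by rw [(mem_filter.1 hσ).2], sum_const,
    card_filter_onesOf_comp_eq hcbar hmult hK hs]

end CycleType

lemma isComposition_of_card_fiber {c : ℕ → ℕ} (hc : ∑ j ∈ Icc 1 n, j * c j = n)
    {cbar : Fin K → ℕ} (hrange : ∀ t, 1 ≤ cbar t ∧ cbar t ≤ n)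
    (hmult : ∀ j : ℕ, 1 ≤ j → j ≤ n → #{t | cbar t = j} = c j) : IsComposition n cbar := by
  refine ⟨fun t => (hrange t).1, ?_⟩
  rw [← hc, ← sum_fiberwise_of_maps_to fun t _ => mem_Icc.2 (hrange t)]
  refine sum_congr rfl fun j hj => ?_
  rw [sum_const_nat fun t ht => (mem_filter.1 ht).2,
    hmult j (mem_Icc.1 hj).1 (mem_Icc.1 hj).2, mul_comm]

end FellerCoupling

theorem stmt12_general (n : ℕ) (hn : 1 ≤ n)
    (θ : ℕ → ℝ)
    (c : ℕ → ℕ) (hc : ∑ j ∈ Finset.Icc 1 n, j * c j = n)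
    (K : ℕ) (hK : K = ∑ j ∈ Finset.Icc 1 n, c j)
    (cbar : Fin K → ℕ)
    (hrange : ∀ t : Fin K, 1 ≤ cbar t ∧ cbar t ≤ n)
    (hmult : ∀ j : ℕ, 1 ≤ j → j ≤ n →
      (Finset.univ.filter (fun t : Fin K => cbar t = j)).card = c j) :
    ∑ s ∈ (Finset.Icc 1 n).powerset.filter
        (fun s => 1 ∈ s ∧ ∀ j ∈ Finset.Icc 1 n, cycCount n s j = c j),
      ∏ i ∈ Finset.Icc 1 n,
        (if i ∈ s then θ i / ((i : ℝ) - 1 + θ i) else ((i : ℝ) - 1) / ((i : ℝ) - 1 + θ i))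
    = (((n - 1).factorial : ℝ) / ∏ k ∈ Finset.Icc 1 n, (θ k + (k : ℝ) - 1)) * θ 1
      * (∏ i ∈ Finset.Icc 1 n, 1 / ((c i).factorial : ℝ))
      * ∑ σ : Equiv.Perm (Fin K), ∏ i ∈ Finset.Icc 1 (K - 1),
          θ (n + 1 - ∑ t ∈ Finset.univ.filter (fun t : Fin K => (t : ℕ) < i), cbar (σ t))
            / (((n + 1 - ∑ t ∈ Finset.univ.filter (fun t : Fin K => (t : ℕ) < i),
                  cbar (σ t) : ℕ) : ℝ) - 1) := by
  open FellerCoupling in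
  have hcbar := isComposition_of_card_fiber hc hrange hmult
  have hfact : (∏ i ∈ Icc 1 n, 1 / ((c i).factorial : ℝ)) * ∏ i ∈ Icc 1 n, ((c i).factorial : ℝ)
      = 1 := by
    rw [← prod_mul_distrib]
    exact prod_eq_one fun i _ => one_div_mul_cancel (by positivity)
  change ∑ s ∈ setsWithCycleType n c, fellerProb n θ s = _ * ∑ σ : Equiv.Perm (Fin K),
    ∏ i ∈ Icc 1 (K - 1), θ (onePos n (cbar ∘ σ) i) / ((onePos n (cbar ∘ σ) i : ℝ) - 1)
  rw [sum_congr rfl fun σ _ =>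
      ((hcbar.comp_perm σ).prod_erase_one_onesOf fun x => θ x / ((x : ℝ) - 1)).symm,
    sum_perm_onesOf_comp hcbar hmult hK hn fun s => ∏ x ∈ s.erase 1, θ x / ((x : ℝ) - 1),
    sum_congr rfl fun s hs =>
      fellerProb_eq (mem_setsWithCycleType.1 hs).1 (mem_setsWithCycleType.1 hs).2.1,
    ← mul_sum, nsmul_eq_mul, Nat.cast_prod, mul_assoc _ (∏ i ∈ Icc 1 n, 1 / _),
    ← mul_assoc (∏ i ∈ Icc 1 n, 1 / _), hfact, one_mul]

/-- joint distribution of the cycle counts of the generalized Feller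
coupling `(Y_n, …, Y_1)` with `P(Y_i = 1) = θ_i/(i-1+θ_i)`. -/
theorem stmt12 (n : ℕ) (hn : 1 ≤ n)
    (θ : ℕ → ℝ) (hθ1 : θ 1 = 1) (hθpos : ∀ i, 1 ≤ i → 0 < θ i)
    (c : ℕ → ℕ) (hc : ∑ j ∈ Finset.Icc 1 n, j * c j = n)
    (K : ℕ) (hK : K = ∑ j ∈ Finset.Icc 1 n, c j)
    (cbar : Fin K → ℕ) (hmono : Monotone cbar)
    (hrange : ∀ t : Fin K, 1 ≤ cbar t ∧ cbar t ≤ n)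
    (hmult : ∀ j : ℕ, 1 ≤ j → j ≤ n →
      (Finset.univ.filter (fun t : Fin K => cbar t = j)).card = c j) :
    ∑ s ∈ (Finset.Icc 1 n).powerset.filter
        (fun s => 1 ∈ s ∧ ∀ j ∈ Finset.Icc 1 n, cycCount n s j = c j),
      ∏ i ∈ Finset.Icc 1 n,
        (if i ∈ s then θ i / ((i : ℝ) - 1 + θ i) else ((i : ℝ) - 1) / ((i : ℝ) - 1 + θ i))
    = (((n - 1).factorial : ℝ) / ∏ k ∈ Finset.Icc 1 n, (θ k + (k : ℝ) - 1)) * θ 1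
      * (∏ i ∈ Finset.Icc 1 n, 1 / ((c i).factorial : ℝ))
      * ∑ σ : Equiv.Perm (Fin K), ∏ i ∈ Finset.Icc 1 (K - 1),
          θ (n + 1 - ∑ t ∈ Finset.univ.filter (fun t : Fin K => (t : ℕ) < i), cbar (σ t))
            / (((n + 1 - ∑ t ∈ Finset.univ.filter (fun t : Fin K => (t : ℕ) < i),
                  cbar (σ t) : ℕ) : ℝ) - 1) :=
  stmt12_general n hn θ c hc K hK cbar hrange hmult
end

section
/- Let p : ℕ → ℝ satisfy p(1) = 0, p(2) = 1, 0 < p(i) < 1 for all i ≥ 3, q(i) := 1 − p(i), and suppose Σ_{j=1}^{∞} p(j) = ∞. Then for every i ≥ 3 the limit φ_i := lim_{m→∞} Σ_{j=0}^{m} (−1)^j Π_{l=i}^{i+j} q(l) exists and satisfies 0 < q(i)·p(i+1) < φ_i < q(i) < 1; in particular 0 < φ_i < 1. -/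
/-!
The products `a j = ∏_{l=i}^{i+j} q(l)` are positive and strictly decreasing because every
`q(l)` lies in `(0, 1)`, and they tend to `0` because `∏ (1 - p l) ≤ exp (-∑ p l)` and the tail
sums of `p` diverge. The alternating series test then gives the limit `φ_i`, and the usual
bounds by partial sums, `a 0 - a 1 + (a 2 - a 3) ≤ φ_i ≤ a 0 - (a 1 - a 2)`, become strict
since `a` is strictly decreasing; note `a 0 - a 1 = q(i) p(i+1)`.
-/

open Finset Filter Topology

theorem StrictAnti.exists_tendsto_alternating_series_mem_Ioo {a : ℕ → ℝ} (ha : StrictAnti a)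
    (ha0 : Tendsto a atTop (𝓝 0)) :
    ∃ φ, Tendsto (fun m ↦ ∑ j ∈ range (m + 1), (-1) ^ j * a j) atTop (𝓝 φ) ∧
      φ ∈ Set.Ioo (a 0 - a 1) (a 0) := by
  obtain ⟨φ, hφ⟩ := ha.antitone.tendsto_alternating_series_of_tendsto_zero ha0
  have hlow := ha.antitone.alternating_series_le_tendsto hφ 2
  have hupp := ha.antitone.tendsto_le_alternating_series hφ 1
  norm_num [sum_range_succ] at hlow hupp
  refine ⟨φ, hφ.comp (tendsto_add_atTop_nat 1), ?_, ?_⟩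
  · linarith [ha (show 2 < 3 by norm_num)]
  · linarith [ha (show 1 < 2 by norm_num)]

theorem prod_one_sub_le_exp_neg_sum {ι : Type*} (s : Finset ι) {p : ι → ℝ}
    (hp : ∀ l ∈ s, p l ≤ 1) : ∏ l ∈ s, (1 - p l) ≤ Real.exp (-∑ l ∈ s, p l) := by
  rw [← sum_neg_distrib, Real.exp_sum]
  exact prod_le_prod (fun l hl ↦ sub_nonneg.2 (hp l hl)) fun l _ ↦ Real.one_sub_le_exp_neg _

theorem tendsto_prod_one_sub_zero_of_tendsto_sum {ι : Type*} {s : ℕ → Finset ι} {p : ι → ℝ}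
    (hp : ∀ n, ∀ l ∈ s n, p l ≤ 1)
    (hsum : Tendsto (fun n ↦ ∑ l ∈ s n, p l) atTop atTop) :
    Tendsto (fun n ↦ ∏ l ∈ s n, (1 - p l)) atTop (𝓝 0) :=
  tendsto_of_tendsto_of_tendsto_of_le_of_le tendsto_const_nhds
    (Real.tendsto_exp_neg_atTop_nhds_zero.comp hsum)
    (fun n ↦ prod_nonneg fun l hl ↦ sub_nonneg.2 (hp n l hl))
    (fun n ↦ prod_one_sub_le_exp_neg_sum (s n) (hp n))

theorem tendsto_sum_Icc_add_atTop {p : ℕ → ℝ} {i : ℕ} (hi : 1 ≤ i)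
    (hdiv : Tendsto (fun N ↦ ∑ j ∈ Icc 1 N, p j) atTop atTop) :
    Tendsto (fun j ↦ ∑ l ∈ Icc i (i + j), p l) atTop atTop := by
  obtain ⟨k, rfl⟩ := Nat.exists_eq_add_of_le' hi
  have hsplit : ∀ j, ∑ l ∈ Icc (k + 1) (k + 1 + j), p l =
      ∑ l ∈ Icc 1 (k + 1 + j), p l - ∑ l ∈ Icc 1 k, p l := by
    intro j
    have hIcc_one : ∀ b : ℕ, Icc 1 b = Ioc 0 b := Icc_add_one_left_eq_Ioc 0
    rw [eq_sub_iff_add_eq', Icc_add_one_left_eq_Ioc, hIcc_one, hIcc_one,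
      sum_Ioc_consecutive p k.zero_le (by omega)]
  simp_rw [hsplit, sub_eq_add_neg]
  exact tendsto_atTop_add_const_right _ _
    (hdiv.comp (tendsto_atTop_mono (Nat.le_add_left · (k + 1)) tendsto_id))

theorem strictAnti_prod_Icc_one_sub {p : ℕ → ℝ} {i : ℕ} (hp : ∀ l, i ≤ l → 0 < p l ∧ p l < 1) :
    StrictAnti fun j ↦ ∏ l ∈ Icc i (i + j), (1 - p l) := by
  refine strictAnti_nat_of_succ_lt fun j ↦ ?_
  have hpos : 0 < ∏ l ∈ Icc i (i + j), (1 - p l) :=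
    prod_pos fun l hl ↦ sub_pos.2 (hp l (mem_Icc.1 hl).1).2
  rw [← add_assoc, prod_Icc_succ_top (by omega)]
  exact mul_lt_of_lt_one_right hpos (sub_lt_self 1 (hp (i + j + 1) (by omega)).1)

theorem stmt13_general (p q : ℕ → ℝ)
    (hp : ∀ i, 3 ≤ i → 0 < p i ∧ p i < 1)
    (hq : ∀ i, q i = 1 - p i)
    (hdiv : Tendsto (fun N : ℕ => ∑ j ∈ Finset.Icc 1 N, p j) atTop atTop) :
    ∀ i : ℕ, 3 ≤ i → ∃ φ : ℝ,
      Tendsto (fun m : ℕ => ∑ j ∈ Finset.range (m + 1),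
          (-1 : ℝ) ^ j * ∏ l ∈ Finset.Icc i (i + j), q l) atTop (nhds φ) ∧
      0 < q i * p (i + 1) ∧ q i * p (i + 1) < φ ∧ φ < q i ∧ q i < 1 := by
  obtain rfl : q = fun l ↦ 1 - p l := funext hq
  intro i hi
  have hpi : ∀ l, i ≤ l → 0 < p l ∧ p l < 1 := fun l hl ↦ hp l (hi.trans hl)
  have hzero := tendsto_prod_one_sub_zero_of_tendsto_sum
    (fun _ l hl ↦ (hpi l (mem_Icc.1 hl).1).2.le) (tendsto_sum_Icc_add_atTop (by omega) hdiv)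
  obtain ⟨φ, hφ, hlow, hupp⟩ :=
    (strictAnti_prod_Icc_one_sub hpi).exists_tendsto_alternating_series_mem_Ioo hzero
  rw [prod_Icc_succ_top (by omega)] at hlow
  simp only [add_zero, Icc_self, prod_singleton] at hlow hupp
  have hpi_pos := (hpi i le_rfl).1
  have hpi_lt_one := (hpi i le_rfl).2
  have hp_succ_pos := (hpi (i + 1) (by omega)).1
  exact ⟨φ, hφ, mul_pos (by linarith) hp_succ_pos, by linarith, hupp, by linarith⟩

/-- existence and bounds for the limiting marginal probabilities
`φ_i = lim_n P(X_i^{n,p} = 1)` of the random-derangement chain. -/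
theorem stmt13 (p q : ℕ → ℝ)
    (hp1 : p 1 = 0) (hp2 : p 2 = 1) (hp : ∀ i, 3 ≤ i → 0 < p i ∧ p i < 1)
    (hq : ∀ i, q i = 1 - p i)
    (hdiv : Tendsto (fun N : ℕ => ∑ j ∈ Finset.Icc 1 N, p j) atTop atTop) :
    ∀ i : ℕ, 3 ≤ i → ∃ φ : ℝ,
      Tendsto (fun m : ℕ => ∑ j ∈ Finset.range (m + 1),
          (-1 : ℝ) ^ j * ∏ l ∈ Finset.Icc i (i + j), q l) atTop (nhds φ) ∧
      0 < q i * p (i + 1) ∧ q i * p (i + 1) < φ ∧ φ < q i ∧ q i < 1 :=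
  stmt13_general p q hp hq hdiv
end

section
/- Let p : ℕ → ℝ satisfy p(1) = 0, p(2) = 1, 0 < p(i) < 1 for i ≥ 3, q(i) := 1 − p(i), and Σ_{j=1}^{∞} p(j) = ∞, so that φ_i := lim_{m→∞} Σ_{j=0}^{m} (−1)^j Π_{l=i}^{i+j} q(l) exists for each i ≥ 3, with φ_1 := 1, φ_2 := 0, and 0 < φ_i < 1 for i ≥ 3. For n ≥ 1 and a : {1,…,n} → {0,1} define: μ_n(a) := Π_{i=1}^{n−1} t_i(a) if a(1) = 1, a(n) = 0 and a has no two adjacent 1s (with t_i(a) = 1 if a(i+1) = 1, t_i(a) = p(i) if a(i+1) = a(i) = 0, t_i(a) = q(i) if a(i+1) = 0, a(i) = 1), and μ_n(a) := 0 otherwise; ρ_n(a) := Π_{i=1}^{n−1} r_i(a) if a(1) = 1 and a has no two adjacent 1s (with r_i(a) = 1 if a(i) = 1, r_i(a) = φ_{i+1}/(1−φ_i) if a(i) = 0 and a(i+1) = 1, r_i(a) = 1 − φ_{i+1}/(1−φ_i) if a(i) = a(i+1) = 0), and ρ_n(a) := 0 otherwise. Then for every n ≥ 2, (1/2)·Σ_{a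 ∈ {0,1}^{{1,…,n}}} |ρ_n(a) − μ_n(a)| = φ_n; that is, the total variation distance between the law of the first n steps of the limiting infinite chain X^{∞,p} and the law of X^{n,p} equals φ_n. -/
open Finset Filter

/-- Mass function of the first `n` steps of the random-derangement chain `X^{n,p}` on
binary strings of length `n`, encoded by the set of `1`-positions. -/
noncomputable def muTV (p q : ℕ → ℝ) (n : ℕ) (s : Finset ℕ) : ℝ :=
  if 1 ∈ s ∧ n ∉ s ∧ ∀ i ∈ s, i + 1 ∉ s then
    ∏ i ∈ Finset.Icc 1 (n - 1), (if i + 1 ∈ s then 1 else if i ∈ s then q i else p i)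
  else 0

/-- Mass function of the first `n` coordinates of the limiting infinite chain `X^{∞,p}`. -/
noncomputable def rhoTV (φ : ℕ → ℝ) (n : ℕ) (s : Finset ℕ) : ℝ :=
  if 1 ∈ s ∧ ∀ i ∈ s, i + 1 ∉ s then
    ∏ i ∈ Finset.Icc 1 (n - 1),
      (if i ∈ s then 1
       else if i + 1 ∈ s then φ (i + 1) / (1 - φ i)
       else 1 - φ (i + 1) / (1 - φ i))
  else 0

/-! Peeling the first term off the alternating series gives `φ i = q i * (1 - φ (i + 1))`. With it,
an induction on `n` shows that on every admissible string (one containing `1`, without two adjacent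
`1`s) the product defining `ρ_n` is `φ_n` or `1 - φ_n` times the product defining `μ_n`, according
as the string ends in `1` or `0`. Hence `|ρ_n - μ_n|` is `ρ_n` on strings ending in `1` and
`φ_n / (1 - φ_n) * ρ_n` on strings ending in `0`. A transfer-matrix induction shows that `ρ_n` gives
mass `φ_n` to the strings ending in `1`, so the total is `2 φ_n`. -/

def Admissible (s : Finset ℕ) : Prop := 1 ∈ s ∧ ∀ i ∈ s, i + 1 ∉ s

instance : DecidablePred Admissible := fun s =>
  inferInstanceAs (Decidable (1 ∈ s ∧ ∀ i ∈ s, i + 1 ∉ s))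

def chainWeight (w : ℕ → Bool → Bool → ℝ) (n : ℕ) (s : Finset ℕ) : ℝ :=
  ∏ i ∈ Icc 1 (n - 1), w i (decide (i ∈ s)) (decide (i + 1 ∈ s))

noncomputable def rhoStep (φ : ℕ → ℝ) (i : ℕ) : Bool → Bool → ℝ
  | true, _ => 1
  | false, true => φ (i + 1) / (1 - φ i)
  | false, false => 1 - φ (i + 1) / (1 - φ i)

def muStep (p q : ℕ → ℝ) (i : ℕ) : Bool → Bool → ℝ
  | _, true => 1
  | true, false => q i
  | false, false => p i

lemma rhoTV_eq (φ : ℕ → ℝ) (n : ℕ) (s : Finset ℕ) :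
    rhoTV φ n s = if Admissible s then chainWeight (rhoStep φ) n s else 0 := by
  rw [rhoTV, chainWeight]
  refine if_congr Iff.rfl (prod_congr rfl fun i _ => ?_) rfl
  by_cases hi : i ∈ s <;> by_cases hi' : i + 1 ∈ s <;> simp [hi, hi', rhoStep]

lemma muTV_eq (p q : ℕ → ℝ) (n : ℕ) (s : Finset ℕ) :
    muTV p q n s = if Admissible s ∧ n ∉ s then chainWeight (muStep p q) n s else 0 := by
  rw [muTV, chainWeight]
  refine if_congr (by unfold Admissible; tauto) (prod_congr rfl fun i _ => ?_) rfl
  by_cases hi : i ∈ s <;> by_cases hi' : i + 1 ∈ s <;> simp [hi, hi', muStep]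

section chainWeight

variable (w : ℕ → Bool → Bool → ℝ)

lemma chainWeight_succ {n : ℕ} (hn : 1 ≤ n) (s : Finset ℕ) :
    chainWeight w (n + 1) s = chainWeight w n s * w n (decide (n ∈ s)) (decide (n + 1 ∈ s)) := by
  obtain ⟨m, rfl⟩ := Nat.exists_eq_add_of_le' hn
  simp only [chainWeight, Nat.add_sub_cancel]
  exact prod_Icc_succ_top (by omega) _

lemma chainWeight_insert (n : ℕ) (s : Finset ℕ) :
    chainWeight w n (insert (n + 1) s) = chainWeight w n s := by
  refine prod_congr rfl fun i hi => ?_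
  have := mem_Icc.1 hi
  simp [show i ≠ n + 1 by omega, show i ≠ n by omega]

end chainWeight

lemma admissible_insert_iff {n : ℕ} (hn : 1 ≤ n) {t : Finset ℕ} (ht : t ⊆ Icc 1 n) :
    Admissible (insert (n + 1) t) ↔ Admissible t ∧ n ∉ t := by
  have hn2 : n + 2 ∉ t := fun h => by have := (mem_Icc.1 (ht h)).2; omega
  simp only [Admissible, mem_insert, forall_eq_or_imp, add_left_inj,
    not_or, show 1 ≠ n + 1 by omega, false_or]
  constructor
  · rintro ⟨h1, -, h⟩
    exact ⟨⟨h1, fun i hi => (h i hi).2⟩, fun hn => (h n hn).1 rfl⟩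
  · rintro ⟨⟨h1, h⟩, hnt⟩
    exact ⟨h1, ⟨by omega, hn2⟩, fun i hi => ⟨fun e => hnt (e ▸ hi), h i hi⟩⟩

lemma sum_powerset_Icc_succ {M : Type*} [AddCommMonoid M] {n : ℕ} (hn : 1 ≤ n)
    (F : Finset ℕ → M) :
    ∑ s ∈ (Icc 1 (n + 1)).powerset, F s =
      ∑ t ∈ (Icc 1 n).powerset, (F t + F (insert (n + 1) t)) := by
  rw [← insert_Icc_right_eq_Icc_add_one (by omega), sum_powerset_insert (by simp), sum_add_distrib]

def massEndingIn (w : ℕ → Bool → Bool → ℝ) (n : ℕ) (b : Bool) : ℝ :=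
  ∑ s ∈ (Icc 1 n).powerset, if Admissible s ∧ decide (n ∈ s) = b then chainWeight w n s else 0

section massEndingIn

variable (w : ℕ → Bool → Bool → ℝ)

lemma massEndingIn_one_true : massEndingIn w 1 true = 1 := by
  rw [massEndingIn, Icc_self, ← insert_empty_eq, sum_powerset_insert (notMem_empty 1),
    powerset_empty, sum_singleton, sum_singleton]
  simp [Admissible, chainWeight]

lemma massEndingIn_one_false : massEndingIn w 1 false = 0 := by
  rw [massEndingIn, Icc_self, ← insert_empty_eq, sum_powerset_insert (notMem_empty 1),
    powerset_empty, sum_singleton, sum_singleton]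
  simp [Admissible]

lemma massEndingIn_succ_true {n : ℕ} (hn : 1 ≤ n) :
    massEndingIn w (n + 1) true = massEndingIn w n false * w n false true := by
  rw [massEndingIn, sum_powerset_Icc_succ hn, massEndingIn, sum_mul]
  refine sum_congr rfl fun t ht => ?_
  have ht := mem_powerset.1 ht
  have hsucc : n + 1 ∉ t := fun h => by have := (mem_Icc.1 (ht h)).2; omega
  simp only [admissible_insert_iff hn ht, chainWeight_succ w hn, chainWeight_insert]
  by_cases hnt : n ∈ t <;> simp [hnt, hsucc]

lemma massEndingIn_succ_false {n : ℕ} (hn : 1 ≤ n) :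
    massEndingIn w (n + 1) false =
      massEndingIn w n true * w n true false + massEndingIn w n false * w n false false := by
  rw [massEndingIn, sum_powerset_Icc_succ hn, massEndingIn, massEndingIn, sum_mul, sum_mul,
    ← sum_add_distrib]
  refine sum_congr rfl fun t ht => ?_
  have ht := mem_powerset.1 ht
  have hsucc : n + 1 ∉ t := fun h => by have := (mem_Icc.1 (ht h)).2; omega
  rw [chainWeight_succ w hn]
  by_cases hnt : n ∈ t <;> simp [hnt, hsucc]

end massEndingIn

section rho

variable {φ : ℕ → ℝ}

lemma one_sub_mul_rhoStep_false_true (hφ1 : φ 1 = 1) (hφ2 : φ 2 = 0)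
    (hφ : ∀ i, 2 ≤ i → φ i ≠ 1) {n : ℕ} (hn : 1 ≤ n) :
    (1 - φ n) * rhoStep φ n false true = φ (n + 1) := by
  rcases hn.eq_or_lt with rfl | hn
  -- at `n = 1` the division is by `1 - φ 1 = 0`; both sides vanish since `φ 2 = 0`
  · simp [rhoStep, hφ1, hφ2]
  · exact mul_div_cancel₀ _ (sub_ne_zero.2 (hφ n hn).symm)

lemma massEndingIn_rhoStep (hφ1 : φ 1 = 1) (hφ2 : φ 2 = 0) (hφ : ∀ i, 2 ≤ i → φ i ≠ 1)
    {n : ℕ} (hn : 1 ≤ n) :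
    massEndingIn (rhoStep φ) n true = φ n ∧ massEndingIn (rhoStep φ) n false = 1 - φ n := by
  induction n, hn using Nat.le_induction with
  | base => exact ⟨by rw [massEndingIn_one_true, hφ1], by rw [massEndingIn_one_false, hφ1]; ring⟩
  | succ n hn ih =>
    have h := one_sub_mul_rhoStep_false_true hφ1 hφ2 hφ hn
    rw [massEndingIn_succ_true _ hn, massEndingIn_succ_false _ hn, ih.1, ih.2]
    refine ⟨by rw [← h, mul_comm], ?_⟩
    simp only [rhoStep] at h ⊢
    linear_combination -h

end rho

lemma chainWeight_nonneg {w : ℕ → Bool → Bool → ℝ} (hw : ∀ i, 1 ≤ i → ∀ a b, 0 ≤ w i a b)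
    (n : ℕ) (s : Finset ℕ) : 0 ≤ chainWeight w n s :=
  prod_nonneg fun i hi => hw i (mem_Icc.1 hi).1 _ _

lemma muStep_nonneg {p q : ℕ → ℝ} {i : ℕ} (hp : 0 ≤ p i) (hq : 0 ≤ q i) :
    ∀ a b, 0 ≤ muStep p q i a b
  | _, true => zero_le_one
  | true, false => hq
  | false, false => hp

lemma chainWeight_rhoStep_eq {p q φ : ℕ → ℝ} (hq : ∀ i, q i = 1 - p i) (hφ1 : φ 1 = 1)
    (hφ2 : φ 2 = 0) (hφ : ∀ i, 2 ≤ i → φ i ≠ 1) (hrec : ∀ i, 1 ≤ i → φ i = q i * (1 - φ (i + 1)))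
    {s : Finset ℕ} (hs : Admissible s) {n : ℕ} (hn : 1 ≤ n) :
    chainWeight (rhoStep φ) n s =
      (if n ∈ s then φ n else 1 - φ n) * chainWeight (muStep p q) n s := by
  induction n, hn using Nat.le_induction with
  | base => simp [chainWeight, hs.1, hφ1]
  | succ n hn ih =>
    have h := one_sub_mul_rhoStep_false_true hφ1 hφ2 hφ hn
    rw [chainWeight_succ _ hn, chainWeight_succ _ hn, ih]
    by_cases hns : n ∈ s
    · have hsucc : n + 1 ∉ s := hs.2 n hns
      simp only [hns, hsucc, if_true, if_false, decide_true, decide_false, rhoStep, muStep]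
      rw [hrec n hn]
      ring
    · by_cases hsucc : n + 1 ∈ s <;>
        simp only [hns, hsucc, if_true, if_false, decide_true, decide_false, rhoStep, muStep] at h ⊢
      · linear_combination (chainWeight (muStep p q) n s) * h
      · linear_combination
          -(chainWeight (muStep p q) n s) * (h + hrec n hn + (1 - φ (n + 1)) * hq n)

section totalVariation

variable {p q φ : ℕ → ℝ}

lemma abs_rhoTV_sub_muTV (hq : ∀ i, q i = 1 - p i) (hφ1 : φ 1 = 1) (hφ2 : φ 2 = 0)
    (hrec : ∀ i, 1 ≤ i → φ i = q i * (1 - φ (i + 1))) (hp : ∀ i, 1 ≤ i → 0 ≤ p i ∧ p i ≤ 1)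
    (hφ : ∀ i, 2 ≤ i → 0 ≤ φ i ∧ φ i < 1) {n : ℕ} (hn : 2 ≤ n) (s : Finset ℕ) :
    |rhoTV φ n s - muTV p q n s| =
      (if Admissible s ∧ n ∈ s then chainWeight (rhoStep φ) n s else 0) +
        φ n / (1 - φ n) * (if Admissible s ∧ n ∉ s then chainWeight (rhoStep φ) n s else 0) := by
  rw [rhoTV_eq, muTV_eq]
  by_cases hs : Admissible s
  swap
  · simp [hs]
  have hφn := hφ n hn
  have hM : 0 ≤ chainWeight (muStep p q) n s := chainWeight_nonneg (fun i hi =>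
    muStep_nonneg (hp i hi).1 (by linarith [hq i, (hp i hi).2])) n s
  rw [chainWeight_rhoStep_eq hq hφ1 hφ2 (fun i hi => (hφ i hi).2.ne) hrec hs (by omega)]
  by_cases hns : n ∈ s
  · simp only [hs, hns, true_and, not_true, and_false, if_true, if_false, sub_zero, mul_zero,
      add_zero]
    exact abs_of_nonneg (mul_nonneg hφn.1 hM)
  · simp only [hs, hns, true_and, not_false_eq_true, and_true, if_true, if_false, zero_add]
    rw [← mul_assoc, div_mul_cancel₀ _ (sub_ne_zero.2 hφn.2.ne'),
      show ∀ M, (1 - φ n) * M - M = -(φ n * M) from fun M => by ring, abs_neg]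
    exact abs_of_nonneg (mul_nonneg hφn.1 hM)

theorem half_sum_abs_rhoTV_sub_muTV (hq : ∀ i, q i = 1 - p i) (hφ1 : φ 1 = 1) (hφ2 : φ 2 = 0)
    (hrec : ∀ i, 1 ≤ i → φ i = q i * (1 - φ (i + 1))) (hp : ∀ i, 1 ≤ i → 0 ≤ p i ∧ p i ≤ 1)
    (hφ : ∀ i, 2 ≤ i → 0 ≤ φ i ∧ φ i < 1) {n : ℕ} (hn : 2 ≤ n) :
    (1 / 2 : ℝ) * ∑ s ∈ (Icc 1 n).powerset, |rhoTV φ n s - muTV p q n s| = φ n := by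
  obtain ⟨hmem, hnotmem⟩ :=
    massEndingIn_rhoStep hφ1 hφ2 (fun i hi => (hφ i hi).2.ne) (n := n) (by omega)
  simp only [massEndingIn, decide_eq_true_eq, decide_eq_false_iff_not] at hmem hnotmem
  rw [sum_congr rfl fun s _ => abs_rhoTV_sub_muTV hq hφ1 hφ2 hrec hp hφ hn s, sum_add_distrib,
    ← mul_sum, hmem, hnotmem, div_mul_cancel₀ _ (sub_ne_zero.2 (hφ n hn).2.ne')]
  ring

end totalVariation

def altTailSum (q : ℕ → ℝ) (i m : ℕ) : ℝ :=
  ∑ j ∈ range (m + 1), (-1) ^ j * ∏ l ∈ Icc i (i + j), q l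

lemma altTailSum_succ (q : ℕ → ℝ) (i m : ℕ) :
    altTailSum q i (m + 1) = q i * (1 - altTailSum q (i + 1) m) := by
  have hprod : ∀ j, ∏ l ∈ Icc i (i + (j + 1)), q l = q i * ∏ l ∈ Icc (i + 1) (i + 1 + j), q l :=
    fun j => by
      rw [← insert_Icc_add_one_left_eq_Icc (by omega), prod_insert (by simp), add_right_comm,
        add_assoc]
  rw [altTailSum, altTailSum, sum_range_succ', mul_sub, mul_sum, sub_eq_neg_add]
  simp only [hprod, pow_succ, pow_zero, add_zero, Icc_self, prod_singleton, one_mul, mul_one]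
  congr 1
  rw [← sum_neg_distrib]
  exact sum_congr rfl fun j _ => by ring

lemma eq_mul_one_sub_of_tendsto_altTailSum {q : ℕ → ℝ} {i : ℕ} {a b : ℝ}
    (ha : Tendsto (altTailSum q i) atTop (nhds a))
    (hb : Tendsto (altTailSum q (i + 1)) atTop (nhds b)) :
    a = q i * (1 - b) :=
  tendsto_nhds_unique ((ha.comp (tendsto_add_atTop_nat 1)).congr (altTailSum_succ q i))
    ((tendsto_const_nhds.sub hb).const_mul (q i))

theorem stmt14_general (p q : ℕ → ℝ)
    (hp1 : p 1 = 0) (hp2 : p 2 = 1) (hp : ∀ i, 3 ≤ i → 0 < p i ∧ p i < 1)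
    (hq : ∀ i, q i = 1 - p i)
    (φ : ℕ → ℝ) (hφ1 : φ 1 = 1) (hφ2 : φ 2 = 0)
    (hφ : ∀ i : ℕ, 3 ≤ i →
      Tendsto (fun m : ℕ => ∑ j ∈ Finset.range (m + 1),
          (-1 : ℝ) ^ j * ∏ l ∈ Finset.Icc i (i + j), q l) atTop (nhds (φ i)) ∧
      0 < φ i ∧ φ i < 1) :
    ∀ n : ℕ, 2 ≤ n →
      (1 / 2 : ℝ) * ∑ s ∈ (Finset.Icc 1 n).powerset, |rhoTV φ n s - muTV p q n s| = φ n := by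
  have hp' : ∀ i, 1 ≤ i → 0 ≤ p i ∧ p i ≤ 1 := fun i hi => by
    rcases (show i = 1 ∨ i = 2 ∨ 3 ≤ i by omega) with rfl | rfl | h
    · simp [hp1]
    · simp [hp2]
    · exact ⟨(hp i h).1.le, (hp i h).2.le⟩
  have hφ' : ∀ i, 2 ≤ i → 0 ≤ φ i ∧ φ i < 1 := fun i hi => by
    rcases hi.eq_or_lt with rfl | h
    · simp [hφ2]
    · exact ⟨(hφ i h).2.1.le, (hφ i h).2.2⟩
  have hrec : ∀ i, 1 ≤ i → φ i = q i * (1 - φ (i + 1)) := fun i hi => by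
    rcases (show i = 1 ∨ i = 2 ∨ 3 ≤ i by omega) with rfl | rfl | h
    · simp [hφ1, hφ2, hq, hp1]
    · simp [hφ2, hq, hp2]
    · exact eq_mul_one_sub_of_tendsto_altTailSum (hφ i h).1 (hφ (i + 1) (by omega)).1
  exact fun n hn => half_sum_abs_rhoTV_sub_muTV hq hφ1 hφ2 hrec hp' hφ' hn

/-- the total variation distance between the first `n` steps of `X^{∞,p}`
and `X^{n,p}` equals `φ_n`. -/
theorem stmt14 (p q : ℕ → ℝ)
    (hp1 : p 1 = 0) (hp2 : p 2 = 1) (hp : ∀ i, 3 ≤ i → 0 < p i ∧ p i < 1)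
    (hq : ∀ i, q i = 1 - p i)
    (hdiv : Tendsto (fun N : ℕ => ∑ j ∈ Finset.Icc 1 N, p j) atTop atTop)
    (φ : ℕ → ℝ) (hφ1 : φ 1 = 1) (hφ2 : φ 2 = 0)
    (hφ : ∀ i : ℕ, 3 ≤ i →
      Tendsto (fun m : ℕ => ∑ j ∈ Finset.range (m + 1),
          (-1 : ℝ) ^ j * ∏ l ∈ Finset.Icc i (i + j), q l) atTop (nhds (φ i)) ∧
      0 < φ i ∧ φ i < 1) :
    ∀ n : ℕ, 2 ≤ n →
      (1 / 2 : ℝ) * ∑ s ∈ (Finset.Icc 1 n).powerset, |rhoTV φ n s - muTV p q n s| = φ n :=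
  stmt14_general p q hp1 hp2 hp hq φ hφ1 hφ2 hφ
end

section
/- Let p : ℕ → ℝ satisfy p(1) = 0, p(2) = 1, 0 < p(i) < 1 for all i ≥ 3, and q(i) := 1 − p(i). Then the following are equivalent: (i) Σ_{n=1}^{∞} p(n) = ∞ and there exists φ : ℕ → ℝ such that for every n ≥ 3 the partial sums Σ_{j=0}^{m} (−1)^j Π_{l=n}^{n+j} q(l) converge to φ(n) as m → ∞, and φ(n) → 0 as n → ∞; (ii) q(n) → 0 as n → ∞. -/
/-!
Peeling off the first factor of every product gives `φ n = q n * (1 - φ (n + 1))`, so `φ → 0`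
forces `q → 0`. Conversely, once `‖q l‖ ≤ 1/2` for `l > n`, the `j`-th term of the series
defining `φ n` is at most `‖q n‖ / 2 ^ j`, so the series converges with `‖φ n‖ ≤ 2 ‖q n‖`;
and `p = 1 - q → 1` makes `∑ p` diverge by Cesàro.
-/

open Finset Filter Topology

section Algebra

variable {R : Type*} [CommRing R]

def altTailTerm (q : ℕ → R) (n j : ℕ) : R := (-1) ^ j * ∏ l ∈ Icc n (n + j), q l

@[simp] lemma altTailTerm_zero (q : ℕ → R) (n : ℕ) : altTailTerm q n 0 = q n := by
  simp [altTailTerm]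

lemma altTailTerm_succ (q : ℕ → R) (n j : ℕ) :
    altTailTerm q n (j + 1) = -(q n * altTailTerm q (n + 1) j) := by
  rw [altTailTerm, altTailTerm, ← mul_prod_Ioc_eq_prod_Icc (by lia), ← Icc_add_one_left_eq_Ioc,
    show n + (j + 1) = n + 1 + j by lia]
  ring

lemma altTailTerm_succ' (q : ℕ → R) (n j : ℕ) :
    altTailTerm q n (j + 1) = -(altTailTerm q n j * q (n + j + 1)) := by
  rw [altTailTerm, altTailTerm, ← add_assoc, prod_Icc_succ_top (by lia)]
  ring

lemma sum_range_altTailTerm_succ (q : ℕ → R) (n m : ℕ) :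
    ∑ j ∈ range (m + 1), altTailTerm q n j =
      q n * (1 - ∑ j ∈ range m, altTailTerm q (n + 1) j) := by
  simp only [sum_range_succ', altTailTerm_succ, altTailTerm_zero, sum_neg_distrib, ← mul_sum]
  ring

end Algebra

section Normed

variable {𝕜 : Type*} [NormedField 𝕜]

lemma eq_mul_one_sub_of_tendsto_sum_altTailTerm {q : ℕ → 𝕜} {n : ℕ} {a b : 𝕜}
    (ha : Tendsto (fun m => ∑ j ∈ range m, altTailTerm q n j) atTop (𝓝 a))
    (hb : Tendsto (fun m => ∑ j ∈ range m, altTailTerm q (n + 1) j) atTop (𝓝 b)) :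
    a = q n * (1 - b) := by
  refine tendsto_nhds_unique (ha.comp (tendsto_add_atTop_nat 1)) ?_
  simpa only [Function.comp_def, sum_range_altTailTerm_succ] using
    (tendsto_const_nhds.sub hb).const_mul (q n)

lemma Filter.Tendsto.of_eq_mul_one_sub {φ q : ℕ → 𝕜}
    (hrec : ∀ᶠ n in atTop, φ n = q n * (1 - φ (n + 1))) (hφ : Tendsto φ atTop (𝓝 0)) :
    Tendsto q atTop (𝓝 0) := by
  have hden : Tendsto (fun n => 1 - φ (n + 1)) atTop (𝓝 1) := by
    simpa using tendsto_const_nhds.sub (hφ.comp (tendsto_add_atTop_nat 1))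
  have hq := hφ.div hden one_ne_zero
  rw [zero_div] at hq
  refine hq.congr' ?_
  filter_upwards [hrec, hden.eventually_ne one_ne_zero] with n hn hne
  rw [Pi.div_apply, hn, mul_div_cancel_right₀ _ hne]

lemma norm_altTailTerm_le {q : ℕ → 𝕜} {n : ℕ} {r : ℝ} (h : ∀ l, n < l → ‖q l‖ ≤ r) (j : ℕ) :
    ‖altTailTerm q n j‖ ≤ ‖q n‖ * r ^ j := by
  have hr : 0 ≤ r := (norm_nonneg _).trans (h (n + 1) (by lia))
  induction j with
  | zero => simp
  | succ j ih =>
    rw [altTailTerm_succ', norm_neg, norm_mul, pow_succ, ← mul_assoc]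
    exact mul_le_mul ih (h _ (by lia)) (norm_nonneg _) (by positivity)

lemma summable_altTailTerm [CompleteSpace 𝕜] {q : ℕ → 𝕜} (hq : Tendsto q atTop (𝓝 0)) (n : ℕ) :
    Summable (altTailTerm q n) := by
  refine summable_of_ratio_norm_eventually_le (r := 1 / 2) (by norm_num) ?_
  rw [tendsto_zero_iff_norm_tendsto_zero] at hq
  obtain ⟨N, hN⟩ := eventually_atTop.1 <|
    hq.eventually (ge_mem_nhds (by norm_num : (0 : ℝ) < 1 / 2))
  filter_upwards [eventually_ge_atTop N] with j hj
  rw [altTailTerm_succ', norm_neg, norm_mul, mul_comm]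
  exact mul_le_mul_of_nonneg_right (hN _ (by lia)) (norm_nonneg _)

lemma norm_tsum_altTailTerm_le {q : ℕ → 𝕜} {n : ℕ} (h : ∀ l, n < l → ‖q l‖ ≤ 1 / 2) :
    ‖∑' j, altTailTerm q n j‖ ≤ 2 * ‖q n‖ := by
  rw [mul_comm]
  exact tsum_of_norm_bounded (hasSum_geometric_two.mul_left ‖q n‖) (norm_altTailTerm_le h)

lemma tendsto_tsum_altTailTerm {q : ℕ → 𝕜} (hq : Tendsto q atTop (𝓝 0)) :
    Tendsto (fun n => ∑' j, altTailTerm q n j) atTop (𝓝 0) := by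
  rw [tendsto_zero_iff_norm_tendsto_zero] at hq
  obtain ⟨N, hN⟩ := eventually_atTop.1 <|
    hq.eventually (ge_mem_nhds (by norm_num : (0 : ℝ) < 1 / 2))
  refine squeeze_zero_norm' ?_ (by simpa using hq.const_mul 2)
  filter_upwards [eventually_ge_atTop N] with n hn
  exact norm_tsum_altTailTerm_le fun l hl => hN l (by lia)

end Normed

lemma tendsto_sum_Icc_atTop_of_tendsto {p : ℕ → ℝ} {c : ℝ} (hc : 0 < c)
    (hp : Tendsto p atTop (𝓝 c)) : Tendsto (fun N => ∑ j ∈ Icc 1 N, p j) atTop atTop := by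
  have hmean := (hp.comp (tendsto_add_atTop_nat 1)).cesaro
  refine (tendsto_natCast_atTop_atTop.atTop_mul_pos hc hmean).congr' ?_
  filter_upwards [eventually_ne_atTop 0] with N hN
  rw [mul_inv_cancel_left₀ (Nat.cast_ne_zero.2 hN), ← Ico_add_one_right_eq_Icc, range_eq_Ico]
  simpa using sum_Ico_add' p 0 N 1

theorem stmt15_general (p q : ℕ → ℝ)
    (hq : ∀ i, q i = 1 - p i) :
    ((Tendsto (fun N : ℕ => ∑ j ∈ Finset.Icc 1 N, p j) atTop atTop) ∧
      ∃ φ : ℕ → ℝ,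
        (∀ n : ℕ, 3 ≤ n →
          Tendsto (fun m : ℕ => ∑ j ∈ Finset.range (m + 1),
              (-1 : ℝ) ^ j * ∏ l ∈ Finset.Icc n (n + j), q l) atTop (nhds (φ n))) ∧
        Tendsto φ atTop (nhds 0)) ↔
    Tendsto q atTop (nhds 0) := by
  constructor
  · rintro ⟨-, φ, hconv, hφ⟩
    refine hφ.of_eq_mul_one_sub ?_
    filter_upwards [eventually_ge_atTop 3] with n hn
    exact eq_mul_one_sub_of_tendsto_sum_altTailTerm
      ((tendsto_add_atTop_iff_nat 1).1 (hconv n hn))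
      ((tendsto_add_atTop_iff_nat 1).1 (hconv (n + 1) (by lia)))
  · intro hq0
    have hp : Tendsto p atTop (𝓝 1) := by
      simpa [hq] using tendsto_const_nhds (x := (1 : ℝ)).sub hq0
    refine ⟨tendsto_sum_Icc_atTop_of_tendsto one_pos hp, fun n => ∑' j, altTailTerm q n j,
      fun n _ => ?_, tendsto_tsum_altTailTerm hq0⟩
    exact (tendsto_add_atTop_iff_nat 1).2 (summable_altTailTerm hq0 n).hasSum.tendsto_sum_nat

/-- the total variation distance `φ_n` between `X^{∞,p}` and `X^{n,p}`
is well defined and tends to `0` iff `q_n → 0`. -/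
theorem stmt15 (p q : ℕ → ℝ)
    (hp1 : p 1 = 0) (hp2 : p 2 = 1) (hp : ∀ i, 3 ≤ i → 0 < p i ∧ p i < 1)
    (hq : ∀ i, q i = 1 - p i) :
    ((Tendsto (fun N : ℕ => ∑ j ∈ Finset.Icc 1 N, p j) atTop atTop) ∧
      ∃ φ : ℕ → ℝ,
        (∀ n : ℕ, 3 ≤ n →
          Tendsto (fun m : ℕ => ∑ j ∈ Finset.range (m + 1),
              (-1 : ℝ) ^ j * ∏ l ∈ Finset.Icc n (n + j), q l) atTop (nhds (φ n))) ∧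
        Tendsto φ atTop (nhds 0)) ↔
    Tendsto q atTop (nhds 0) :=
  stmt15_general p q hq
end
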